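/- arXiv:2301.05167 — 8 statements merged into one kernel-verified Lean document; each statement's English description precedes it below -/
import Mathlib

section
/- The value of the program FullOp, namely the infimum over pairs (μ, ν) of Borel probability measures on [0,∞) with ∫∫ max(x,y) dν(y) dμ(x) ≥ 1 of the quantity sup_{t ≥ 0} [ ∫ x dμ(x) + ∫∫ (y − x)·1{x ≤ t ≤ y} dν(y) dμ(x) ], is equal to the tight worst-case approximation ratio of fixed-price mechanisms, i.e. equal to the infimum over instances I = (F_S, F_B) with 0 < OPT(I) < ∞ of sup_{p ≥ 0} W(I,p) / OPT(I). -/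
/-!
Both programs are invariant under rescaling all values by a positive constant: dividing the
values of an instance by `OPT` turns it into a feasible point of `FullOp` whose objective is
exactly its approximation ratio, and conversely a feasible point of `FullOp` has `OPT ≥ 1`, so
its approximation ratio is at most its objective.
-/

open MeasureTheory

/-- Expected welfare of the fixed price `p` on the bilateral-trade instance `(μ, ν)`. -/
noncomputable def welfare (μ ν : Measure ℝ) (p : ℝ) : ℝ :=
  ∫ z : ℝ × ℝ, (z.1 + if z.1 ≤ p ∧ p ≤ z.2 then z.2 - z.1 else 0) ∂(μ.prod ν)

/-- Optimal welfare `OPT(I) = E[max(S,B)]`. -/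
noncomputable def optWelfare (μ ν : Measure ℝ) : ℝ :=
  ∫ z : ℝ × ℝ, max z.1 z.2 ∂(μ.prod ν)

/-- The value of the program `FullOp`: the infimum, over pairs `(μ, ν)` of Borel
probability measures on `[0,∞)` with `∫∫ max(x,y) ≥ 1`, of
`sup_{t ≥ 0} W((μ,ν), t)` (encoded as the infimum of all `r` bounding all the
welfare values `W((μ,ν), t)`, `t ≥ 0`, for some feasible `(μ, ν)`). -/
noncomputable def fullOpValue : ℝ :=
  sInf { r : ℝ | ∃ μ ν : Measure ℝ, IsProbabilityMeasure μ ∧ IsProbabilityMeasure ν ∧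
    μ (Set.Iio 0) = 0 ∧ ν (Set.Iio 0) = 0 ∧
    1 ≤ optWelfare μ ν ∧
    ∀ t : ℝ, 0 ≤ t → welfare μ ν t ≤ r }

/-- The tight worst-case approximation ratio of fixed-price mechanisms:
the infimum over instances `I` with `0 < OPT(I) < ∞` of `sup_{p ≥ 0} W(I,p)/OPT(I)`. -/
noncomputable def tightRatio : ℝ :=
  sInf { x : ℝ | ∃ μ ν : Measure ℝ, IsProbabilityMeasure μ ∧ IsProbabilityMeasure ν ∧
    μ (Set.Iio 0) = 0 ∧ ν (Set.Iio 0) = 0 ∧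
    Integrable (fun z : ℝ × ℝ => max z.1 z.2) (μ.prod ν) ∧
    0 < optWelfare μ ν ∧
    x = sSup { y : ℝ | ∃ p : ℝ, 0 ≤ p ∧ y = welfare μ ν p / optWelfare μ ν } }

variable {μ ν : Measure ℝ}

noncomputable def welfareIntegrand (p : ℝ) (z : ℝ × ℝ) : ℝ :=
  z.1 + if z.1 ≤ p ∧ p ≤ z.2 then z.2 - z.1 else 0

lemma welfare_eq_integral (p : ℝ) :
    welfare μ ν p = ∫ z, welfareIntegrand p z ∂(μ.prod ν) := rfl

lemma measurable_welfareIntegrand (p : ℝ) : Measurable (welfareIntegrand p) :=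
  measurable_fst.add <| Measurable.ite
    ((measurableSet_le measurable_fst measurable_const).inter
      (measurableSet_le measurable_const measurable_snd))
    (measurable_snd.sub measurable_fst) measurable_const

lemma welfareIntegrand_nonneg {p : ℝ} {z : ℝ × ℝ} (h₁ : 0 ≤ z.1) (h₂ : 0 ≤ z.2) :
    0 ≤ welfareIntegrand p z := by
  unfold welfareIntegrand
  split_ifs <;> linarith

lemma welfareIntegrand_le_max (p : ℝ) (z : ℝ × ℝ) : welfareIntegrand p z ≤ max z.1 z.2 := by
  unfold welfareIntegrand
  split_ifs <;> simp

lemma welfareIntegrand_div {c : ℝ} (hc : 0 < c) (p : ℝ) (z : ℝ × ℝ) :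
    welfareIntegrand p (z.1 / c, z.2 / c) = welfareIntegrand (c * p) z / c := by
  unfold welfareIntegrand
  simp only [div_le_iff₀' hc, le_div_iff₀' hc]
  split_ifs
  · field_simp
  · simp

lemma ae_nonneg_of_measure_Iio_zero (hμ : μ (Set.Iio 0) = 0) :
    ∀ᵐ x ∂μ, 0 ≤ x := by
  simpa [ae_iff, Set.Iio] using hμ

lemma ae_nonneg_prod (hμ : μ (Set.Iio 0) = 0) (hν : ν (Set.Iio 0) = 0) :
    ∀ᵐ z ∂(μ.prod ν), 0 ≤ z.1 ∧ 0 ≤ z.2 :=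
  (Measure.quasiMeasurePreserving_fst.ae (ae_nonneg_of_measure_Iio_zero hμ)).and
    (Measure.quasiMeasurePreserving_snd.ae (ae_nonneg_of_measure_Iio_zero hν))

lemma welfare_nonneg (hμ : μ (Set.Iio 0) = 0) (hν : ν (Set.Iio 0) = 0) (p : ℝ) :
    0 ≤ welfare μ ν p :=
  integral_nonneg_of_ae <| (ae_nonneg_prod hμ hν).mono fun _ hz ↦
    welfareIntegrand_nonneg hz.1 hz.2

lemma welfare_le_optWelfare (hμ : μ (Set.Iio 0) = 0) (hν : ν (Set.Iio 0) = 0)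
    (hmax : Integrable (fun z : ℝ × ℝ ↦ max z.1 z.2) (μ.prod ν))
    (p : ℝ) : welfare μ ν p ≤ optWelfare μ ν := by
  have hint : Integrable (welfareIntegrand p) (μ.prod ν) := by
    refine hmax.mono (measurable_welfareIntegrand p).aestronglyMeasurable ?_
    filter_upwards [ae_nonneg_prod hμ hν] with z ⟨h₁, h₂⟩
    rw [Real.norm_of_nonneg (welfareIntegrand_nonneg h₁ h₂),
      Real.norm_of_nonneg (le_max_of_le_left h₁)]
    exact welfareIntegrand_le_max p z
  exact integral_mono hint hmax (welfareIntegrand_le_max p)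

lemma bddAbove_welfare_div_optWelfare (hμ : μ (Set.Iio 0) = 0) (hν : ν (Set.Iio 0) = 0)
    (hmax : Integrable (fun z : ℝ × ℝ ↦ max z.1 z.2) (μ.prod ν)) (hopt : 0 < optWelfare μ ν) :
    BddAbove {y : ℝ | ∃ p : ℝ, 0 ≤ p ∧ y = welfare μ ν p / optWelfare μ ν} := by
  refine ⟨1, ?_⟩
  rintro y ⟨p, -, rfl⟩
  exact (div_le_one hopt).mpr (welfare_le_optWelfare hμ hν hmax p)

lemma measure_map_div_Iio_zero {c : ℝ} (hc : 0 < c) (hμ : μ (Set.Iio 0) = 0) :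
    μ.map (· / c) (Set.Iio 0) = 0 := by
  rw [Measure.map_apply (measurable_div_const c) measurableSet_Iio]
  convert hμ using 2
  ext x
  simp [div_neg_iff, hc, hc.le.not_gt]

lemma welfare_map_div [SFinite μ] [SFinite ν] {c : ℝ} (hc : 0 < c) (p : ℝ) :
    welfare (μ.map (· / c)) (ν.map (· / c)) p = welfare μ ν (c * p) / c := by
  have hf : Measurable (· / c : ℝ → ℝ) := measurable_div_const c
  rw [welfare_eq_integral, Measure.map_prod_map _ _ hf hf,
    integral_map (hf.prodMap hf).aemeasurable
      (measurable_welfareIntegrand p).aestronglyMeasurable]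
  simp only [Prod.map, welfareIntegrand_div hc, integral_div, welfare_eq_integral]

lemma optWelfare_map_div [SFinite μ] [SFinite ν] {c : ℝ} (hc : 0 < c) :
    optWelfare (μ.map (· / c)) (ν.map (· / c)) = optWelfare μ ν / c := by
  have hf : Measurable (· / c : ℝ → ℝ) := measurable_div_const c
  rw [optWelfare, Measure.map_prod_map _ _ hf hf,
    integral_map (hf.prodMap hf).aemeasurable
      (measurable_fst.max measurable_snd).aestronglyMeasurable]
  simp only [Prod.map, max_div_div_right hc.le, integral_div, optWelfare]

lemma welfare_dirac_self (a p : ℝ) :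
    welfare (Measure.dirac a) (Measure.dirac a) p = a := by
  rw [welfare_eq_integral, Measure.dirac_prod_dirac, integral_dirac, welfareIntegrand]
  simp

lemma optWelfare_dirac_self (a : ℝ) : optWelfare (Measure.dirac a) (Measure.dirac a) = a := by
  rw [optWelfare, Measure.dirac_prod_dirac, integral_dirac, max_self]

lemma dirac_one_Iio_zero : Measure.dirac (1 : ℝ) (Set.Iio 0) = 0 := by
  simp [Measure.dirac_apply' _ measurableSet_Iio]

-- `optWelfare` is the junk value `0` when `max` is not integrable.
lemma integrable_of_one_le_optWelfare (h : 1 ≤ optWelfare μ ν) :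
    Integrable (fun z : ℝ × ℝ ↦ max z.1 z.2) (μ.prod ν) := by
  by_contra hint
  rw [optWelfare, integral_undef hint] at h
  exact absurd h (by norm_num)

lemma fullOpValue_le_tightRatio : fullOpValue ≤ tightRatio := by
  refine le_csInf ⟨_, Measure.dirac 1, Measure.dirac 1, inferInstance, inferInstance,
    dirac_one_Iio_zero, dirac_one_Iio_zero, ?_, by simp [optWelfare_dirac_self], rfl⟩ ?_
  · rw [Measure.dirac_prod_dirac]
    exact integrable_dirac (by simp)
  rintro _ ⟨μ, ν, _, _, hμ, hν, hmax, hopt, rfl⟩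
  have hbdd : BddBelow {r : ℝ | ∃ μ ν : Measure ℝ, IsProbabilityMeasure μ ∧
      IsProbabilityMeasure ν ∧ μ (Set.Iio 0) = 0 ∧ ν (Set.Iio 0) = 0 ∧
      1 ≤ optWelfare μ ν ∧ ∀ t : ℝ, 0 ≤ t → welfare μ ν t ≤ r} := by
    refine ⟨0, ?_⟩
    rintro r ⟨μ, ν, _, _, hμ, hν, -, hr⟩
    exact (welfare_nonneg hμ hν 0).trans (hr 0 le_rfl)
  have hf : Measurable (· / optWelfare μ ν : ℝ → ℝ) := measurable_div_const _
  refine csInf_le hbdd ⟨μ.map (· / optWelfare μ ν), ν.map (· / optWelfare μ ν),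
    Measure.isProbabilityMeasure_map hf.aemeasurable,
    Measure.isProbabilityMeasure_map hf.aemeasurable,
    measure_map_div_Iio_zero hopt hμ, measure_map_div_Iio_zero hopt hν,
    (optWelfare_map_div hopt).trans (div_self hopt.ne') |>.ge, fun t ht ↦ ?_⟩
  rw [welfare_map_div hopt]
  exact le_csSup (bddAbove_welfare_div_optWelfare hμ hν hmax hopt)
    ⟨_, mul_nonneg hopt.le ht, rfl⟩

lemma tightRatio_le_fullOpValue : tightRatio ≤ fullOpValue := by
  refine le_csInf ⟨1, Measure.dirac 1, Measure.dirac 1, inferInstance, inferInstance,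
    dirac_one_Iio_zero, dirac_one_Iio_zero, (optWelfare_dirac_self 1).ge,
    fun t _ ↦ (welfare_dirac_self 1 t).le⟩ ?_
  rintro r ⟨μ, ν, _, _, hμ, hν, hopt, hr⟩
  have hbdd : BddBelow {x : ℝ | ∃ μ ν : Measure ℝ, IsProbabilityMeasure μ ∧
      IsProbabilityMeasure ν ∧ μ (Set.Iio 0) = 0 ∧ ν (Set.Iio 0) = 0 ∧
      Integrable (fun z : ℝ × ℝ ↦ max z.1 z.2) (μ.prod ν) ∧ 0 < optWelfare μ ν ∧
      x = sSup {y : ℝ | ∃ p : ℝ, 0 ≤ p ∧ y = welfare μ ν p / optWelfare μ ν}} := by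
    refine ⟨0, ?_⟩
    rintro _ ⟨μ, ν, _, _, hμ, hν, hmax, hopt, rfl⟩
    exact (div_nonneg (welfare_nonneg hμ hν 0) hopt.le).trans
      (le_csSup (bddAbove_welfare_div_optWelfare hμ hν hmax hopt) ⟨0, le_rfl, rfl⟩)
  refine (csInf_le hbdd ⟨μ, ν, ‹_›, ‹_›, hμ, hν, integrable_of_one_le_optWelfare hopt,
    zero_lt_one.trans_le hopt, rfl⟩).trans (csSup_le ⟨_, 0, le_rfl, rfl⟩ ?_)
  rintro _ ⟨p, hp, rfl⟩
  exact (div_le_self (welfare_nonneg hμ hν p) hopt).trans (hr p hp)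

/-- The value of `FullOp` equals the tight worst-case approximation ratio of
fixed-price mechanisms. -/
theorem stmt_2 : fullOpValue = tightRatio :=
  le_antisymm fullOpValue_le_tightRatio tightRatio_le_fullOpValue
end

section
/- Let 0 = p₁ < p₂ < ⋯ < pₙ and let r* be the infimum of the program LowerOp with respect to (p₁,…,pₙ). Then for every instance I = (F_S, F_B) of bilateral trade in which F_S and F_B have finite first moments, max_{t ∈ {1,…,n}} W(I, p_t · OPT(I)) ≥ r* · OPT(I); i.e., the mechanism choosing the best price from {p₁·OPT(I), …, pₙ·OPT(I)} obtains welfare at least r* · OPT(I). -/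
/-
Scale prices by `OPT`, so that the candidate prices are the grid points `q t = p t * OPT`.
Split every value `x ≥ 0` over the grid by linear interpolation between the two grid points
enclosing it, a value above the top point `q n` being put on `q n` with weight `x / q n`: the
weights are nonnegative, sum to `max 1 (x / q n)` and have barycentre `x`. The expected weights
`s` and `b` of the seller's and the buyer's value are then feasible for `LowerOp`, with
`r = max_t W(I, p t * OPT) / OPT`. The mass constraints follow from `E[S], E[B] ≤ OPT`, the max
constraint from `max x y ≤ ∑ᵢ ∑ⱼ wᵢ(x) wⱼ(y) max (q i) (q j)`, and the constraint for `t` from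
the pointwise fact that trades of the split values across `q t` gain at most `y - x`, and only
when `x ≤ q t ≤ y`, which is what the actual trade at price `q t` gains.
-/

open MeasureTheory

/-- The optimal value of the program `LowerOp` with respect to the price grid
`p : Fin (n+1) → ℝ`. -/
noncomputable def lowerOpValue (n : ℕ) (p : Fin (n + 1) → ℝ) : ℝ :=
  sInf { r : ℝ | ∃ s b : Fin (n + 1) → ℝ,
    (∀ i, 0 ≤ s i) ∧ (∀ i, 0 ≤ b i) ∧
    1 ≤ ∑ i, s i ∧ 1 ≤ ∑ i, b i ∧
    ∑ i, s i ≤ 1 + 1 / p (Fin.last n) ∧ ∑ i, b i ≤ 1 + 1 / p (Fin.last n) ∧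
    1 ≤ ∑ i, ∑ j, s i * b j * max (p i) (p j) ∧
    ∀ t : Fin (n + 1),
      ∑ i, s i * p i +
        ∑ i ∈ Finset.univ.filter (fun i => i < t),
          ∑ j ∈ Finset.univ.filter (fun j => t < j), s i * b j * (p j - p i) ≤ r }

open Finset

section Finite

variable {ι : Type*} [Fintype ι] [LinearOrder ι]

def tradeAcross (t : ι) (u v q : ι → ℝ) : ℝ :=
  ∑ i ∈ univ.filter (· < t), ∑ j ∈ univ.filter (t < ·), u i * v j * (q j - q i)

theorem tradeAcross_mul_right (t : ι) (u v q : ι → ℝ) (c : ℝ) :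
    tradeAcross t u v (fun i => q i * c) = tradeAcross t u v q * c := by
  simp only [tradeAcross, sum_mul, ← sub_mul, mul_assoc]

theorem sum_eq_sum_lt_add_add_sum_gt (t : ι) (f : ι → ℝ) :
    ∑ i, f i = ∑ i ∈ univ.filter (· < t), f i + f t + ∑ i ∈ univ.filter (t < ·), f i := by
  have hge : univ.filter (fun i => ¬ i < t) = insert t (univ.filter (t < ·)) := by
    ext i
    simp [le_iff_eq_or_lt, eq_comm]
  rw [← sum_filter_add_sum_filter_not univ (· < t), hge, sum_insert (by simp), add_assoc]

theorem sum_eq_sum_lt_add_of_eq_zero {t : ι} {f : ι → ℝ} (hf : ∀ i, t < i → f i = 0) :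
    ∑ i, f i = ∑ i ∈ univ.filter (· < t), f i + f t := by
  rw [sum_eq_sum_lt_add_add_sum_gt t f, sum_eq_zero fun i hi => hf i (mem_filter.mp hi).2,
    add_zero]

theorem sum_eq_add_sum_gt_of_eq_zero {t : ι} {f : ι → ℝ} (hf : ∀ i, i < t → f i = 0) :
    ∑ i, f i = f t + ∑ i ∈ univ.filter (t < ·), f i := by
  rw [sum_eq_sum_lt_add_add_sum_gt t f, sum_eq_zero fun i hi => hf i (mem_filter.mp hi).2,
    zero_add]

theorem tradeAcross_eq (t : ι) (u v q : ι → ℝ) :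
    tradeAcross t u v q =
      (∑ i ∈ univ.filter (· < t), u i) * ∑ j ∈ univ.filter (t < ·), v j * q j -
        (∑ i ∈ univ.filter (· < t), u i * q i) * ∑ j ∈ univ.filter (t < ·), v j := by
  rw [tradeAcross, sum_mul_sum, sum_mul_sum, ← sum_sub_distrib]
  refine sum_congr rfl fun i _ => ?_
  rw [← sum_sub_distrib]
  exact sum_congr rfl fun j _ => by ring

theorem tradeAcross_le_sub {t : ι} {u v q : ι → ℝ} (hq : Monotone q) (hq0 : ∀ i, 0 ≤ q i)
    (hu : ∀ i, 0 ≤ u i) (hv : ∀ j, 0 ≤ v j) (hu_supp : ∀ i, t < i → u i = 0)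
    (hv_supp : ∀ j, j < t → v j = 0) (hu1 : ∑ i, u i = 1) (hv1 : 1 ≤ ∑ j, v j) :
    tradeAcross t u v q ≤ ∑ j, v j * q j - ∑ i, u i * q i := by
  have hlow := sum_eq_sum_lt_add_of_eq_zero hu_supp
  have hlow_mul := sum_eq_sum_lt_add_of_eq_zero (f := fun i => u i * q i)
    fun i hi => by rw [hu_supp i hi, zero_mul]
  have hhigh := sum_eq_add_sum_gt_of_eq_zero hv_supp
  have hhigh_mul := sum_eq_add_sum_gt_of_eq_zero (f := fun j => v j * q j)
    fun j hj => by rw [hv_supp j hj, zero_mul]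
  rw [tradeAcross_eq, hlow_mul, hhigh_mul]
  set A := ∑ i ∈ univ.filter (· < t), u i
  set a := ∑ i ∈ univ.filter (· < t), u i * q i
  set B := ∑ j ∈ univ.filter (t < ·), v j
  set b := ∑ j ∈ univ.filter (t < ·), v j * q j
  have ha0 : 0 ≤ a := sum_nonneg fun i _ => mul_nonneg (hu i) (hq0 i)
  have ha_le : a ≤ A * q t := by
    rw [sum_mul]
    exact sum_le_sum fun i hi => mul_le_mul_of_nonneg_left (hq (mem_filter.mp hi).2.le) (hu i)
  have hb_ge : B * q t ≤ b := by
    rw [sum_mul]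
    exact sum_le_sum fun j hj => mul_le_mul_of_nonneg_left (hq (mem_filter.mp hj).2.le) (hv j)
  rw [show A = 1 - u t by linarith]
  -- The slack is `u t * b + a * (B - 1) + q t * (v t - u t)`; bound `a * (B - 1)` below by `0`
  -- or by `A * q t * (B - 1)` according to the sign of `B - 1`.
  have hub := mul_nonneg (hu t) (sub_nonneg.mpr hb_ge)
  have hqv := mul_nonneg (hq0 t) (hv t)
  rcases le_total 1 B with hB1 | hB1
  · nlinarith [mul_nonneg ha0 (sub_nonneg.mpr hB1),
      mul_nonneg (hq0 t) (mul_nonneg (hu t) (sub_nonneg.mpr hB1))]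
  · nlinarith [mul_nonneg (sub_nonneg.mpr ha_le) (sub_nonneg.mpr hB1),
      mul_nonneg (hq0 t) (show 0 ≤ v t + B - 1 by linarith)]

end Finite

theorem max_le_sum_sum_mul_max {ι : Type*} [Fintype ι] {u v q : ι → ℝ} (hu : ∀ i, 0 ≤ u i)
    (hv : ∀ j, 0 ≤ v j) (hu1 : 1 ≤ ∑ i, u i) (hv1 : 1 ≤ ∑ j, v j)
    (hx : 0 ≤ ∑ i, u i * q i) (hy : 0 ≤ ∑ j, v j * q j) :
    max (∑ i, u i * q i) (∑ j, v j * q j) ≤ ∑ i, ∑ j, u i * v j * max (q i) (q j) := by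
  have hmax {i j : ι} {c : ℝ} (hc : c ≤ max (q i) (q j)) :
      u i * v j * c ≤ u i * v j * max (q i) (q j) :=
    mul_le_mul_of_nonneg_left hc (mul_nonneg (hu i) (hv j))
  apply max_le
  · calc ∑ i, u i * q i ≤ (∑ i, u i * q i) * ∑ j, v j := le_mul_of_one_le_right hx hv1
      _ = ∑ i, ∑ j, u i * v j * q i := by
          rw [sum_mul_sum]
          exact sum_congr rfl fun i _ => sum_congr rfl fun j _ => by ring
      _ ≤ _ := sum_le_sum fun i _ => sum_le_sum fun j _ => hmax (le_max_left _ _)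
  · calc ∑ j, v j * q j ≤ (∑ i, u i) * ∑ j, v j * q j := le_mul_of_one_le_left hy hu1
      _ = ∑ i, ∑ j, u i * v j * q j := by
          rw [sum_mul_sum]
          exact sum_congr rfl fun i _ => sum_congr rfl fun j _ => by ring
      _ ≤ _ := sum_le_sum fun i _ => sum_le_sum fun j _ => hmax (le_max_right _ _)

noncomputable def segFrac (a b x : ℝ) : ℝ :=
  (min x b - min x a) / (b - a)

section SegFrac

variable {a b x : ℝ}

theorem segFrac_nonneg (hab : a ≤ b) : 0 ≤ segFrac a b x :=
  div_nonneg (sub_nonneg.mpr (min_le_min_left x hab)) (sub_nonneg.mpr hab)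

theorem segFrac_le_one (hab : a ≤ b) : segFrac a b x ≤ 1 := by
  refine div_le_one_of_le₀ ?_ (sub_nonneg.mpr hab)
  rcases le_total x a with h | h
  · rw [min_eq_left h, min_eq_left (h.trans hab)]; linarith
  · rw [min_eq_right h]; linarith [min_le_right x b]

theorem segFrac_eq_zero (hab : a ≤ b) (hx : x ≤ a) : segFrac a b x = 0 := by
  rw [segFrac, min_eq_left hx, min_eq_left (hx.trans hab), sub_self, zero_div]

theorem segFrac_eq_one (hab : a < b) (hx : b ≤ x) : segFrac a b x = 1 := by
  rw [segFrac, min_eq_right hx, min_eq_right (hab.le.trans hx), div_self (sub_pos.mpr hab).ne']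

theorem segFrac_mul_sub (a b x : ℝ) : segFrac a b x * (b - a) = min x b - min x a := by
  rcases eq_or_ne b a with rfl | hab
  · simp
  · exact div_mul_cancel₀ _ (sub_ne_zero.mpr hab)

theorem continuous_segFrac (a b : ℝ) : Continuous (segFrac a b) := by
  unfold segFrac; fun_prop

end SegFrac

section Grid

open Fin.NatCast

variable {n : ℕ}

/-- The weight that the split of `x` puts on the grid points `q k, …, q n`, leaving out the
overflow `x / q n - 1` on `q n`. The cast `(k : Fin (n + 1))` wraps around, but it is evaluated
only for `k < n`. -/
noncomputable def gridSurvival (q : Fin (n + 1) → ℝ) : ℕ → ℝ → ℝ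
  | 0, _ => 1
  | k + 1, x => if k < n then segFrac (q k) (q (k + 1 : ℕ)) x else 0

noncomputable def gridWeight (q : Fin (n + 1) → ℝ) (i : Fin (n + 1)) (x : ℝ) : ℝ :=
  gridSurvival q i x - gridSurvival q (i + 1 : ℕ) x +
    if i = Fin.last n then max (x / q (Fin.last n) - 1) 0 else 0

variable {q : Fin (n + 1) → ℝ} {x : ℝ}

theorem Monotone.apply_natCast_le (hq : Monotone q) {k l : ℕ} (hkl : k ≤ l) (hl : l ≤ n) :
    q k ≤ q l :=
  hq ((Fin.natCast_le_natCast (hkl.trans hl) hl).mpr hkl)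

theorem gridSurvival_nonneg (hq : Monotone q) (k : ℕ) (x : ℝ) : 0 ≤ gridSurvival q k x := by
  cases k with
  | zero => exact zero_le_one
  | succ k =>
    simp only [gridSurvival]
    split_ifs with hk
    · exact segFrac_nonneg (hq.apply_natCast_le k.le_succ hk)
    · exact le_rfl

theorem gridSurvival_succ_eq_zero (hq : Monotone q) {k : ℕ} (hx : x ≤ q k) :
    gridSurvival q (k + 1) x = 0 := by
  simp only [gridSurvival]
  split_ifs with hk
  · exact segFrac_eq_zero (hq.apply_natCast_le k.le_succ hk) hx
  · rfl

theorem gridSurvival_eq_one (hq : StrictMono q) {k : ℕ} (hk : k ≤ n) (hx : q k ≤ x) :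
    gridSurvival q k x = 1 := by
  cases k with
  | zero => rfl
  | succ k =>
    simp only [gridSurvival, if_pos (Nat.lt_of_succ_le hk)]
    exact segFrac_eq_one (hq ((Fin.natCast_lt_natCast (by omega) hk).mpr k.lt_succ_self)) hx

theorem gridSurvival_le_one (hq : StrictMono q) (k : ℕ) (x : ℝ) : gridSurvival q k x ≤ 1 := by
  cases k with
  | zero => exact le_rfl
  | succ k =>
    simp only [gridSurvival]
    split_ifs with hk
    · exact segFrac_le_one (hq.monotone.apply_natCast_le k.le_succ hk)
    · exact zero_le_one

theorem gridSurvival_succ_le (hq : StrictMono q) (k : ℕ) (x : ℝ) :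
    gridSurvival q (k + 1) x ≤ gridSurvival q k x := by
  by_cases hk : k < n
  · rcases le_total x (q k) with hx | hx
    · rw [gridSurvival_succ_eq_zero hq.monotone hx]
      exact gridSurvival_nonneg hq.monotone k x
    · rw [gridSurvival_eq_one hq hk.le hx]
      exact gridSurvival_le_one hq _ x
  · simp only [gridSurvival, if_neg hk]
    exact gridSurvival_nonneg hq.monotone k x

theorem gridWeight_nonneg (hq : StrictMono q) (i : Fin (n + 1)) (x : ℝ) :
    0 ≤ gridWeight q i x := by
  have hsurv := gridSurvival_succ_le hq i x
  have hoverflow : 0 ≤ if i = Fin.last n then max (x / q (Fin.last n) - 1) 0 else 0 := by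
    split_ifs
    exacts [le_max_right _ _, le_rfl]
  unfold gridWeight
  linarith

theorem sum_gridWeight (x : ℝ) :
    ∑ i, gridWeight q i x = max 1 (x / q (Fin.last n)) := by
  simp only [gridWeight, sum_add_distrib, sum_ite_eq', mem_univ, if_true]
  rw [Fin.sum_univ_eq_sum_range (fun k => gridSurvival q k x - gridSurvival q (k + 1) x),
    sum_range_sub']
  simp only [gridSurvival, lt_irrefl, if_false]
  rcases le_total 1 (x / q (Fin.last n)) with h | h
  · rw [max_eq_left (sub_nonneg.mpr h), max_eq_right h]; ring
  · rw [max_eq_right (sub_nonpos.mpr h), max_eq_left h]; ring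

theorem sum_range_gridSurvival_mul_sub (x : ℝ) :
    ∑ k ∈ range (n + 1), gridSurvival q (k + 1) x * (q (k + 1 : ℕ) - q k) =
      min x (q (Fin.last n)) - min x (q 0) := by
  rw [sum_range_succ]
  simp only [gridSurvival, lt_irrefl, if_false, zero_mul, add_zero]
  rw [sum_congr rfl fun k hk => by rw [if_pos (mem_range.mp hk), segFrac_mul_sub],
    sum_range_sub (fun k => min x (q k)), Fin.natCast_eq_last, Nat.cast_zero]

theorem sum_gridWeight_mul (hq0 : q 0 = 0) (hlast : 0 < q (Fin.last n)) (hx : 0 ≤ x) :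
    ∑ i, gridWeight q i x * q i = x := by
  have hoverflow : max (x / q (Fin.last n) - 1) 0 * q (Fin.last n) =
      max (x - q (Fin.last n)) 0 := by
    rw [max_mul_of_nonneg _ _ hlast.le, sub_mul, div_mul_cancel₀ _ hlast.ne', one_mul, zero_mul]
  have hterm (i : Fin (n + 1)) : gridWeight q i x * q i =
      (gridSurvival q i x * q (i : ℕ) - gridSurvival q (i + 1 : ℕ) x * q (i + 1 : ℕ)) +
        gridSurvival q (i + 1 : ℕ) x * (q (i + 1 : ℕ) - q (i : ℕ)) +
        if i = Fin.last n then max (x - q (Fin.last n)) 0 else 0 := by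
    rw [gridWeight, Fin.cast_val_eq_self]
    split_ifs with hi
    · rw [hi, ← hoverflow]; ring
    · ring
  rw [sum_congr rfl fun i _ => hterm i, sum_add_distrib, sum_add_distrib,
    Fin.sum_univ_eq_sum_range (fun k => gridSurvival q k x * q k -
      gridSurvival q (k + 1) x * q (k + 1 : ℕ)),
    Fin.sum_univ_eq_sum_range (fun k => gridSurvival q (k + 1) x * (q (k + 1 : ℕ) - q k)),
    sum_range_sub', sum_range_gridSurvival_mul_sub, sum_ite_eq', if_pos (mem_univ _)]
  simp only [gridSurvival, lt_irrefl, if_false, zero_mul, Nat.cast_zero, hq0, mul_zero,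
    min_eq_right hx]
  rcases le_total x (q (Fin.last n)) with h | h
  · rw [min_eq_left h, max_eq_right (sub_nonpos.mpr h)]; ring
  · rw [min_eq_right h, max_eq_left (sub_nonneg.mpr h)]; ring

theorem gridWeight_eq_zero_of_le (hq : StrictMono q) (hlast : 0 < q (Fin.last n))
    {t i : Fin (n + 1)} (hti : t < i) (hx : x ≤ q t) : gridWeight q i x = 0 := by
  obtain ⟨m, hm⟩ : ∃ m, (i : ℕ) = m + 1 := Nat.exists_eq_succ_of_ne_zero (by omega)
  have htm : t ≤ (m : Fin (n + 1)) := by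
    rw [Fin.le_def, Fin.val_cast_of_lt (by omega)]
    omega
  have hxi : x ≤ q ((m + 1 : ℕ) : Fin (n + 1)) := by
    rw [← hm, Fin.cast_val_eq_self]
    exact hx.trans (hq.monotone hti.le)
  unfold gridWeight
  rw [hm, gridSurvival_succ_eq_zero hq.monotone (hx.trans (hq.monotone htm)),
    gridSurvival_succ_eq_zero hq.monotone hxi]
  split_ifs with hi
  · have hxlast : x / q (Fin.last n) ≤ 1 :=
      (div_le_one hlast).mpr (hx.trans (hq.monotone (hi ▸ hti.le)))
    rw [max_eq_right (sub_nonpos.mpr hxlast)]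
    ring
  · ring

theorem gridWeight_eq_zero_of_ge (hq : StrictMono q) {t i : Fin (n + 1)} (hit : i < t)
    (hx : q t ≤ x) : gridWeight q i x = 0 := by
  have hit' : (i : ℕ) < t := Fin.lt_def.mp hit
  have hself : q (i : ℕ) ≤ x := by
    rw [Fin.cast_val_eq_self]
    exact (hq.monotone hit.le).trans hx
  have hsucc : ((i + 1 : ℕ) : Fin (n + 1)) ≤ t := by
    rw [Fin.le_def, Fin.val_cast_of_lt (by omega)]
    omega
  unfold gridWeight
  rw [gridSurvival_eq_one hq i.is_le hself,
    gridSurvival_eq_one hq (by omega) ((hq.monotone hsucc).trans hx),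
    if_neg (hit.trans_le (Fin.le_last t)).ne]
  ring

variable {y : ℝ}

theorem tradeAcross_gridWeight_le (hq : StrictMono q) (hq0 : q 0 = 0)
    (hlast : 0 < q (Fin.last n)) (t : Fin (n + 1)) (hx : 0 ≤ x) (hy : 0 ≤ y) :
    tradeAcross t (fun i => gridWeight q i x) (fun j => gridWeight q j y) q ≤
      if x ≤ q t ∧ q t ≤ y then y - x else 0 := by
  split_ifs with h
  · have hx1 : max 1 (x / q (Fin.last n)) = 1 :=
      max_eq_left ((div_le_one hlast).mpr (h.1.trans (hq.monotone (Fin.le_last t))))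
    have := tradeAcross_le_sub hq.monotone (fun i => hq0 ▸ hq.monotone (Fin.zero_le i))
      (fun i => gridWeight_nonneg hq i x) (fun j => gridWeight_nonneg hq j y)
      (fun i hti => gridWeight_eq_zero_of_le hq hlast hti h.1)
      (fun j hjt => gridWeight_eq_zero_of_ge hq hjt h.2)
      (by rw [sum_gridWeight, hx1]) (by rw [sum_gridWeight]; exact le_max_left _ _)
    rwa [sum_gridWeight_mul hq0 hlast hx, sum_gridWeight_mul hq0 hlast hy] at this
  · refine le_of_eq (sum_eq_zero fun i hi => sum_eq_zero fun j hj => ?_)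
    rcases not_and_or.mp h with hxt | hyt
    · dsimp only
      rw [gridWeight_eq_zero_of_ge hq (mem_filter.mp hi).2 (not_le.mp hxt).le, zero_mul, zero_mul]
    · dsimp only
      rw [gridWeight_eq_zero_of_le hq hlast (mem_filter.mp hj).2 (not_le.mp hyt).le, mul_zero,
        zero_mul]

theorem max_le_sum_sum_gridWeight_mul_max (hq : StrictMono q) (hq0 : q 0 = 0)
    (hlast : 0 < q (Fin.last n)) (hx : 0 ≤ x) (hy : 0 ≤ y) :
    max x y ≤ ∑ i : Fin (n + 1), ∑ j : Fin (n + 1),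
      gridWeight q i x * gridWeight q j y * max (q i) (q j) := by
  have hsx := sum_gridWeight_mul hq0 hlast hx
  have hsy := sum_gridWeight_mul hq0 hlast hy
  have h := max_le_sum_sum_mul_max (fun i => gridWeight_nonneg hq i x)
    (fun j => gridWeight_nonneg hq j y) (by rw [sum_gridWeight]; exact le_max_left _ _)
    (by rw [sum_gridWeight]; exact le_max_left _ _) (hsx.symm ▸ hx) (hsy.symm ▸ hy)
  rwa [hsx, hsy] at h

end Grid

section ProductIntegral

variable {α β ι κ : Type*} [MeasurableSpace α] [MeasurableSpace β] {μ : Measure α}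
  {ν : Measure β} {f : ι → α → ℝ} {g : κ → β → ℝ}

theorem integrable_prod_sum_sum_mul (I : Finset ι) (J : Finset κ) (hf : ∀ i, Integrable (f i) μ)
    (hg : ∀ j, Integrable (g j) ν) (c : ι → κ → ℝ) :
    Integrable (fun z : α × β => ∑ i ∈ I, ∑ j ∈ J, f i z.1 * g j z.2 * c i j) (μ.prod ν) :=
  integrable_finsetSum _ fun i _ => integrable_finsetSum _ fun j _ =>
    ((hf i).mul_prod (hg j)).mul_const _

theorem integral_prod_sum_sum_mul [SFinite μ] [SFinite ν] (I : Finset ι) (J : Finset κ)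
    (hf : ∀ i, Integrable (f i) μ) (hg : ∀ j, Integrable (g j) ν) (c : ι → κ → ℝ) :
    ∫ z, ∑ i ∈ I, ∑ j ∈ J, f i z.1 * g j z.2 * c i j ∂μ.prod ν =
      ∑ i ∈ I, ∑ j ∈ J, (∫ x, f i x ∂μ) * (∫ y, g j y ∂ν) * c i j := by
  rw [integral_finsetSum _ fun i _ => integrable_finsetSum _ fun j _ =>
    ((hf i).mul_prod (hg j)).mul_const _]
  refine sum_congr rfl fun i _ => ?_
  rw [integral_finsetSum _ fun j _ => ((hf i).mul_prod (hg j)).mul_const _]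
  exact sum_congr rfl fun j _ => by rw [integral_mul_const, integral_prod_mul]

end ProductIntegral

section GridMass

variable {n : ℕ} {q : Fin (n + 1) → ℝ} {μ ν : Measure ℝ}

theorem continuous_gridSurvival (k : ℕ) : Continuous (gridSurvival q k) := by
  cases k with
  | zero => exact continuous_const
  | succ k =>
    show Continuous fun x => gridSurvival q (k + 1) x
    simp only [gridSurvival]
    split_ifs
    exacts [continuous_segFrac _ _, continuous_const]

theorem continuous_gridWeight (i : Fin (n + 1)) : Continuous (gridWeight q i) := by
  show Continuous fun x => gridWeight q i x
  simp only [gridWeight]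
  refine ((continuous_gridSurvival _).sub (continuous_gridSurvival _)).add ?_
  split_ifs
  exacts [by fun_prop, continuous_const]

theorem integrable_max_one_div [IsFiniteMeasure μ] (hμi : Integrable id μ) (c : ℝ) :
    Integrable (fun x => max 1 (x / c)) μ :=
  (integrable_const 1).sup (hμi.div_const c)

theorem integrable_gridWeight [IsFiniteMeasure μ] (hq : StrictMono q) (hμi : Integrable id μ)
    (i : Fin (n + 1)) : Integrable (gridWeight q i) μ := by
  refine (integrable_max_one_div hμi (q (Fin.last n))).mono'
    (continuous_gridWeight i).aestronglyMeasurable (ae_of_all _ fun x => ?_)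
  rw [Real.norm_of_nonneg (gridWeight_nonneg hq i x), ← sum_gridWeight x]
  exact single_le_sum (fun j _ => gridWeight_nonneg hq j x) (mem_univ i)

noncomputable def gridMass (q : Fin (n + 1) → ℝ) (μ : Measure ℝ) (i : Fin (n + 1)) : ℝ :=
  ∫ x, gridWeight q i x ∂μ

theorem gridMass_nonneg (hq : StrictMono q) (i : Fin (n + 1)) : 0 ≤ gridMass q μ i :=
  integral_nonneg (gridWeight_nonneg hq i)

theorem sum_gridMass [IsFiniteMeasure μ] (hq : StrictMono q) (hμi : Integrable id μ) :
    ∑ i, gridMass q μ i = ∫ x, max 1 (x / q (Fin.last n)) ∂μ := by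
  simp only [gridMass]
  rw [← integral_finsetSum _ fun i _ => integrable_gridWeight hq hμi i]
  simp only [sum_gridWeight]

theorem one_le_sum_gridMass [IsProbabilityMeasure μ] (hq : StrictMono q)
    (hμi : Integrable id μ) : 1 ≤ ∑ i, gridMass q μ i := by
  rw [sum_gridMass hq hμi]
  calc (1 : ℝ) = ∫ _, (1 : ℝ) ∂μ := by simp
    _ ≤ _ := integral_mono (integrable_const 1) (integrable_max_one_div hμi _)
        fun x => le_max_left _ _

theorem sum_gridMass_le [IsProbabilityMeasure μ] (hq : StrictMono q)
    (hlast : 0 < q (Fin.last n)) (hμ0 : ∀ᵐ x ∂μ, 0 ≤ x) (hμi : Integrable id μ) :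
    ∑ i, gridMass q μ i ≤ 1 + (∫ x, x ∂μ) / q (Fin.last n) := by
  rw [sum_gridMass hq hμi]
  calc ∫ x, max 1 (x / q (Fin.last n)) ∂μ ≤ ∫ x, (1 + x / q (Fin.last n)) ∂μ :=
        integral_mono_ae (integrable_max_one_div hμi _)
          ((integrable_const 1).add (hμi.div_const _)) (hμ0.mono fun x hx =>
            max_le (le_add_of_nonneg_right (div_nonneg hx hlast.le))
              (le_add_of_nonneg_left zero_le_one))
    _ = 1 + (∫ x, x ∂μ) / q (Fin.last n) := by
        rw [integral_add (g := fun x => x / q (Fin.last n)) (integrable_const 1)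
          (hμi.div_const _), integral_div]
        simp

theorem sum_gridMass_mul [IsFiniteMeasure μ] (hq : StrictMono q) (hq0 : q 0 = 0)
    (hlast : 0 < q (Fin.last n)) (hμ0 : ∀ᵐ x ∂μ, 0 ≤ x) (hμi : Integrable id μ) :
    ∑ i, gridMass q μ i * q i = ∫ x, x ∂μ := by
  simp only [gridMass, ← integral_mul_const]
  rw [← integral_finsetSum _ fun i _ => (integrable_gridWeight hq hμi i).mul_const _]
  exact integral_congr_ae (hμ0.mono fun x hx => sum_gridWeight_mul hq0 hlast hx)

end GridMass

section Welfare

variable {μ ν : Measure ℝ}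

theorem ae_prod_nonneg (hμ0 : ∀ᵐ x ∂μ, 0 ≤ x) (hν0 : ∀ᵐ y ∂ν, 0 ≤ y) :
    ∀ᵐ z ∂μ.prod ν, 0 ≤ z.1 ∧ 0 ≤ z.2 :=
  (Measure.quasiMeasurePreserving_fst.ae hμ0).and (Measure.quasiMeasurePreserving_snd.ae hν0)

theorem welfare_nonneg_s3 (hμ0 : ∀ᵐ x ∂μ, 0 ≤ x) (hν0 : ∀ᵐ y ∂ν, 0 ≤ y) (c : ℝ) :
    0 ≤ welfare μ ν c :=
  integral_nonneg_of_ae <| (ae_prod_nonneg hμ0 hν0).mono fun z hz => by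
    show 0 ≤ z.1 + _
    split_ifs <;> linarith [hz.1, hz.2]

theorem optWelfare_nonneg (hμ0 : ∀ᵐ x ∂μ, 0 ≤ x) (hν0 : ∀ᵐ y ∂ν, 0 ≤ y) :
    0 ≤ optWelfare μ ν :=
  integral_nonneg_of_ae <| (ae_prod_nonneg hμ0 hν0).mono fun _ hz => le_max_of_le_left hz.1

theorem integral_self_eq_integral_fst [SFinite μ] [IsProbabilityMeasure ν] :
    ∫ x, x ∂μ = ∫ z, z.1 ∂μ.prod ν := by
  rw [integral_fun_fst (fun x : ℝ => x), probReal_univ, one_smul]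

variable [IsProbabilityMeasure μ] [IsProbabilityMeasure ν]

theorem integrable_welfare_integrand (hμi : Integrable id μ) (hνi : Integrable id ν) (c : ℝ) :
    Integrable (fun z : ℝ × ℝ => z.1 + if z.1 ≤ c ∧ c ≤ z.2 then z.2 - z.1 else 0) (μ.prod ν) := by
  have hS : MeasurableSet {z : ℝ × ℝ | z.1 ≤ c ∧ c ≤ z.2} :=
    (measurableSet_le measurable_fst measurable_const).inter
      (measurableSet_le measurable_const measurable_snd)
  refine (hμi.comp_fst ν).add <| (((hνi.comp_snd μ).sub (hμi.comp_fst ν)).indicator hS).congr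
    (ae_of_all _ fun _ => ?_)
  simp [Set.indicator_apply]

theorem integral_le_optWelfare_left (hμi : Integrable id μ) (hνi : Integrable id ν) :
    ∫ x, x ∂μ ≤ optWelfare μ ν :=
  calc ∫ x, x ∂μ = ∫ z, z.1 ∂μ.prod ν := integral_self_eq_integral_fst
    _ ≤ _ := integral_mono (hμi.comp_fst ν) ((hμi.comp_fst ν).sup (hνi.comp_snd μ))
        fun _ => le_max_left _ _

theorem integral_le_optWelfare_right (hμi : Integrable id μ) (hνi : Integrable id ν) :
    ∫ y, y ∂ν ≤ optWelfare μ ν :=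
  calc ∫ y, y ∂ν = ∫ z, z.2 ∂μ.prod ν := by
        rw [integral_fun_snd (fun y : ℝ => y), probReal_univ, one_smul]
    _ ≤ _ := integral_mono (hνi.comp_snd μ) ((hμi.comp_fst ν).sup (hνi.comp_snd μ))
        fun _ => le_max_right _ _

variable {n : ℕ} {q : Fin (n + 1) → ℝ}

theorem optWelfare_le_sum_gridMass (hq : StrictMono q) (hq0 : q 0 = 0)
    (hlast : 0 < q (Fin.last n)) (hμ0 : ∀ᵐ x ∂μ, 0 ≤ x) (hν0 : ∀ᵐ y ∂ν, 0 ≤ y)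
    (hμi : Integrable id μ) (hνi : Integrable id ν) :
    optWelfare μ ν ≤ ∑ i, ∑ j, gridMass q μ i * gridMass q ν j * max (q i) (q j) := by
  simp only [gridMass]
  rw [← integral_prod_sum_sum_mul univ univ (integrable_gridWeight hq hμi)
    (integrable_gridWeight hq hνi) fun i j => max (q i) (q j)]
  exact integral_mono_ae ((hμi.comp_fst ν).sup (hνi.comp_snd μ))
    (integrable_prod_sum_sum_mul _ _ (integrable_gridWeight hq hμi)
      (integrable_gridWeight hq hνi) _)
    ((ae_prod_nonneg hμ0 hν0).mono fun z hz =>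
      max_le_sum_sum_gridWeight_mul_max hq hq0 hlast hz.1 hz.2)

theorem sum_gridMass_mul_add_tradeAcross_le_welfare (hq : StrictMono q) (hq0 : q 0 = 0)
    (hlast : 0 < q (Fin.last n)) (hμ0 : ∀ᵐ x ∂μ, 0 ≤ x) (hν0 : ∀ᵐ y ∂ν, 0 ≤ y)
    (hμi : Integrable id μ) (hνi : Integrable id ν) (t : Fin (n + 1)) :
    ∑ i, gridMass q μ i * q i + tradeAcross t (gridMass q μ) (gridMass q ν) q ≤
      welfare μ ν (q t) := by
  have htrade_int : Integrable (fun z : ℝ × ℝ =>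
      tradeAcross t (fun i => gridWeight q i z.1) (fun j => gridWeight q j z.2) q) (μ.prod ν) :=
    integrable_prod_sum_sum_mul _ _ (integrable_gridWeight hq hμi) (integrable_gridWeight hq hνi) _
  have htrade : tradeAcross t (gridMass q μ) (gridMass q ν) q =
      ∫ z, tradeAcross t (fun i => gridWeight q i z.1) (fun j => gridWeight q j z.2) q
        ∂μ.prod ν :=
    (integral_prod_sum_sum_mul _ _ (integrable_gridWeight hq hμi) (integrable_gridWeight hq hνi)
      fun i j => q j - q i).symm
  rw [sum_gridMass_mul hq hq0 hlast hμ0 hμi, htrade, integral_self_eq_integral_fst (ν := ν),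
    ← integral_add (f := fun z => z.1) (hμi.comp_fst ν) htrade_int]
  exact integral_mono_ae ((hμi.comp_fst ν).add htrade_int) (integrable_welfare_integrand hμi hνi _)
    ((ae_prod_nonneg hμ0 hν0).mono fun z hz =>
      add_le_add_right (tradeAcross_gridWeight_le hq hq0 hlast t hz.1 hz.2) z.1)

end Welfare

section LowerOp

variable {n : ℕ} {p : Fin (n + 1) → ℝ}

def LowerOpFeasible (p s b : Fin (n + 1) → ℝ) (r : ℝ) : Prop :=
  (∀ i, 0 ≤ s i) ∧ (∀ i, 0 ≤ b i) ∧
    1 ≤ ∑ i, s i ∧ 1 ≤ ∑ i, b i ∧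
    ∑ i, s i ≤ 1 + 1 / p (Fin.last n) ∧ ∑ i, b i ≤ 1 + 1 / p (Fin.last n) ∧
    1 ≤ ∑ i, ∑ j, s i * b j * max (p i) (p j) ∧
    ∀ t, ∑ i, s i * p i + tradeAcross t s b p ≤ r

theorem lowerOpValue_eq_sInf : lowerOpValue n p = sInf {r | ∃ s b, LowerOpFeasible p s b r} :=
  rfl

theorem tradeAcross_zero (u v q : Fin (n + 1) → ℝ) : tradeAcross 0 u v q = 0 := by
  simp [tradeAcross]

theorem lowerOpValue_le (hp0 : p 0 = 0) (hp : Monotone p) {s b : Fin (n + 1) → ℝ} {r : ℝ}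
    (h : LowerOpFeasible p s b r) : lowerOpValue n p ≤ r := by
  rw [lowerOpValue_eq_sInf]
  refine csInf_le ⟨0, ?_⟩ ⟨s, b, h⟩
  rintro r' ⟨s', b', hs', -, -, -, -, -, -, ht'⟩
  have h0 := ht' 0
  rw [tradeAcross_zero, add_zero] at h0
  exact (sum_nonneg fun i _ => mul_nonneg (hs' i) (hp0 ▸ hp (Fin.zero_le i))).trans h0

theorem lowerOpValue_zero {p : Fin 1 → ℝ} (hp0 : p 0 = 0) : lowerOpValue 0 p = 0 := by
  have hinfeasible : {r : ℝ | ∃ s b, LowerOpFeasible p s b r} = ∅ :=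
    Set.eq_empty_of_forall_notMem fun _ ⟨_, _, _, _, _, _, _, _, hmax, _⟩ => by
      simp [hp0] at hmax
      linarith
  rw [lowerOpValue_eq_sInf, hinfeasible, Real.sInf_empty]

theorem sum_gridMass_le_one_add_inv {μ : Measure ℝ} [IsProbabilityMeasure μ] {c : ℝ}
    (hp : StrictMono p) (hlast : 0 < p (Fin.last n)) (hc : 0 < c) (hμ0 : ∀ᵐ x ∂μ, 0 ≤ x)
    (hμi : Integrable id μ) (hμc : ∫ x, x ∂μ ≤ c) :
    ∑ i, gridMass (fun i => p i * c) μ i ≤ 1 + 1 / p (Fin.last n) :=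
  calc ∑ i, gridMass (fun i => p i * c) μ i ≤ 1 + (∫ x, x ∂μ) / (p (Fin.last n) * c) :=
        sum_gridMass_le (hp.mul_const hc) (mul_pos hlast hc) hμ0 hμi
    _ ≤ 1 + c / (p (Fin.last n) * c) := by gcongr
    _ = 1 + 1 / p (Fin.last n) := by rw [mul_comm, ← div_div, div_self hc.ne']

theorem lowerOpFeasible_gridMass {μ ν : Measure ℝ} [IsProbabilityMeasure μ]
    [IsProbabilityMeasure ν] (hp0 : p 0 = 0) (hp : StrictMono p) (hlast : 0 < p (Fin.last n))
    (hμ0 : ∀ᵐ x ∂μ, 0 ≤ x) (hν0 : ∀ᵐ y ∂ν, 0 ≤ y) (hμi : Integrable id μ)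
    (hνi : Integrable id ν) (hO : 0 < optWelfare μ ν) {r : ℝ}
    (hr : ∀ t, welfare μ ν (p t * optWelfare μ ν) ≤ r * optWelfare μ ν) :
    LowerOpFeasible p (gridMass (fun i => p i * optWelfare μ ν) μ)
      (gridMass (fun i => p i * optWelfare μ ν) ν) r := by
  set O := optWelfare μ ν
  set q : Fin (n + 1) → ℝ := fun i => p i * O
  have hq : StrictMono q := hp.mul_const hO
  have hq0 : q 0 = 0 := by simp [q, hp0]
  have hqlast : 0 < q (Fin.last n) := mul_pos hlast hO
  refine ⟨gridMass_nonneg hq, gridMass_nonneg hq, one_le_sum_gridMass hq hμi,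
    one_le_sum_gridMass hq hνi,
    sum_gridMass_le_one_add_inv hp hlast hO hμ0 hμi (integral_le_optWelfare_left hμi hνi),
    sum_gridMass_le_one_add_inv hp hlast hO hν0 hνi (integral_le_optWelfare_right hμi hνi),
    ?_, fun t => ?_⟩
  · refine le_of_mul_le_mul_right ?_ hO
    calc 1 * O = O := one_mul O
      _ ≤ ∑ i, ∑ j, gridMass q μ i * gridMass q ν j * max (q i) (q j) :=
          optWelfare_le_sum_gridMass hq hq0 hqlast hμ0 hν0 hμi hνi
      _ = (∑ i, ∑ j, gridMass q μ i * gridMass q ν j * max (p i) (p j)) * O := by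
          simp only [q, ← max_mul_of_nonneg _ _ hO.le, sum_mul, mul_assoc]
  · refine le_of_mul_le_mul_right ?_ hO
    calc (∑ i, gridMass q μ i * p i + tradeAcross t (gridMass q μ) (gridMass q ν) p) * O
        = ∑ i, gridMass q μ i * q i + tradeAcross t (gridMass q μ) (gridMass q ν) q := by
          rw [tradeAcross_mul_right, add_mul, sum_mul]
          simp only [q, mul_assoc]
      _ ≤ welfare μ ν (q t) :=
          sum_gridMass_mul_add_tradeAcross_le_welfare hq hq0 hqlast hμ0 hν0 hμi hνi t
      _ ≤ r * O := hr t

end LowerOp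

/-- Given a grid `0 = p₁ < ⋯ < pₙ` and `r*` the value of `LowerOp`, for every
instance with finite first moments the best price among `{pₜ · OPT(I)}` obtains
welfare at least `r* · OPT(I)`. -/
theorem stmt_3 (n : ℕ) (p : Fin (n + 1) → ℝ) (hp0 : p 0 = 0) (hp : StrictMono p)
    (μ ν : Measure ℝ) [IsProbabilityMeasure μ] [IsProbabilityMeasure ν]
    (hμ : μ (Set.Iio 0) = 0) (hν : ν (Set.Iio 0) = 0)
    (hμi : Integrable id μ) (hνi : Integrable id ν) :
    ∃ t : Fin (n + 1),
      lowerOpValue n p * optWelfare μ ν ≤ welfare μ ν (p t * optWelfare μ ν) := by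
  have hμ0 : ∀ᵐ x ∂μ, 0 ≤ x := ae_iff.mpr <| measure_mono_null (fun _ hx => not_le.mp hx) hμ
  have hν0 : ∀ᵐ y ∂ν, 0 ≤ y := ae_iff.mpr <| measure_mono_null (fun _ hy => not_le.mp hy) hν
  obtain ⟨t, -, ht⟩ := exists_max_image univ
    (fun t => welfare μ ν (p t * optWelfare μ ν)) univ_nonempty
  refine ⟨t, ?_⟩
  rcases (optWelfare_nonneg hμ0 hν0).eq_or_lt with hO | hO
  · rw [← hO, mul_zero, mul_zero]
    exact welfare_nonneg_s3 hμ0 hν0 0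
  rcases Nat.eq_zero_or_pos n with rfl | hn
  · rw [lowerOpValue_zero hp0, zero_mul]
    exact welfare_nonneg_s3 hμ0 hν0 _
  have hlast : 0 < p (Fin.last n) := hp0 ▸ hp (Fin.lt_def.mpr hn)
  have hfeas := lowerOpFeasible_gridMass hp0 hp hlast hμ0 hν0 hμi hνi hO
    (r := welfare μ ν (p t * optWelfare μ ν) / optWelfare μ ν)
    fun t' => by rw [div_mul_cancel₀ _ hO.ne']; exact ht t' (mem_univ t')
  calc lowerOpValue n p * optWelfare μ ν
      ≤ welfare μ ν (p t * optWelfare μ ν) / optWelfare μ ν * optWelfare μ ν := by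
        gcongr
        exact lowerOpValue_le hp0 hp.monotone hfeas
    _ = welfare μ ν (p t * optWelfare μ ν) := div_mul_cancel₀ _ hO.ne'
end

section
/- Let 0 ≤ p₁ < p₂ < ⋯ < pₙ and let (s₁,…,sₙ, b₁,…,bₙ, r) be a feasible solution of UpperOp with r = max_{t ∈ {1,…,n}} [ Σᵢ sᵢ pᵢ + Σ_{i=1}^{t} Σ_{j=t+1}^{n} sᵢ bⱼ (pⱼ − pᵢ) ]. Then for every ε > 0 there exists an instance I = (F_S, F_B) of bilateral trade with 0 < OPT(I) < ∞ such that for every price p ≥ 0, W(I,p) ≤ (r + ε) · OPT(I). -/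
open MeasureTheory
open scoped ENNReal

lemma aux_smul_prod (c : ℝ≥0∞) (μ ν : Measure ℝ) [SFinite ν] :
    (c • μ).prod ν = c • (μ.prod ν) := by
  ext t ht
  rw [Measure.prod_apply ht, Measure.smul_apply, Measure.prod_apply ht,
    lintegral_smul_measure, smul_eq_mul]

lemma aux_prod_smul (c : ℝ≥0∞) (μ ν : Measure ℝ) [SFinite ν] :
    μ.prod (c • ν) = c • (μ.prod ν) := by
  ext t ht
  rw [Measure.prod_apply ht, Measure.smul_apply, Measure.prod_apply ht, smul_eq_mul,
    ← lintegral_const_mul c (measurable_measure_prodMk_left ht)]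
  simp [Measure.smul_apply]

lemma aux_prod_finsum {m : ℕ} (c d : Fin m → ℝ≥0∞) (x y : Fin m → ℝ) :
    (∑ i, c i • Measure.dirac (x i)).prod (∑ j, d j • Measure.dirac (y j))
      = ∑ i, ∑ j, (c i * d j) • Measure.dirac ((x i, y j) : ℝ × ℝ) := by
  rw [← Measure.sum_fintype (fun i => c i • Measure.dirac (x i)),
    ← Measure.sum_fintype (fun j => d j • Measure.dirac (y j)),
    Measure.prod_sum, Measure.sum_fintype, Fintype.sum_prod_type]
  refine Finset.sum_congr rfl fun i _ => Finset.sum_congr rfl fun j _ => ?_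
  rw [aux_smul_prod, aux_prod_smul, Measure.dirac_prod_dirac, smul_smul]

lemma aux_integrable_finsum_dirac {ι : Type*} [Fintype ι] (w : ι → ℝ≥0∞) (hw : ∀ i, w i ≠ ⊤)
    (z : ι → ℝ × ℝ) (f : ℝ × ℝ → ℝ) :
    Integrable f (∑ i, w i • Measure.dirac (z i)) := by
  refine integrable_finset_sum_measure.2 fun i _ => ?_
  exact ((integrable_const (f (z i))).congr (ae_eq_dirac f).symm).smul_measure (hw i)

lemma aux_integral_finsum_dirac {ι : Type*} [Fintype ι] (w : ι → ℝ) (hw : ∀ i, 0 ≤ w i)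
    (z : ι → ℝ × ℝ) (f : ℝ × ℝ → ℝ) :
    ∫ a, f a ∂(∑ i, ENNReal.ofReal (w i) • Measure.dirac (z i)) = ∑ i, w i * f (z i) := by
  rw [integral_finset_sum_measure (fun i _ =>
    (((integrable_const (f (z i))).congr (ae_eq_dirac f).symm).smul_measure
      ENNReal.ofReal_ne_top))]
  refine Finset.sum_congr rfl fun i _ => ?_
  rw [integral_smul_measure, integral_dirac, ENNReal.toReal_ofReal (hw i), smul_eq_mul]

/-- For a feasible solution of `UpperOp` whose objective `r` is the maximum over `t`
of `Σᵢ sᵢpᵢ + Σ_{i ≤ t} Σ_{j > t} sᵢ bⱼ (pⱼ − pᵢ)`, and any `ε > 0`, there is an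
instance on which no fixed price gets more than `(r + ε)` of the optimal welfare. -/
theorem stmt_4 (n : ℕ) (p : Fin (n + 1) → ℝ) (hp0 : 0 ≤ p 0) (hp : StrictMono p)
    (s b : Fin (n + 1) → ℝ) (r : ℝ)
    (hs : ∀ i, 0 ≤ s i) (hb : ∀ i, 0 ≤ b i)
    (hs1 : ∑ i, s i = 1) (hb1 : ∑ i, b i = 1)
    (hfeas : 1 ≤ ∑ i, ∑ j, s i * b j * max (p i) (p j))
    (hr : IsGreatest (Set.range fun t : Fin (n + 1) =>
      ∑ i, s i * p i +
        ∑ i ∈ Finset.univ.filter (fun i => i ≤ t),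
          ∑ j ∈ Finset.univ.filter (fun j => t < j), s i * b j * (p j - p i)) r)
    (ε : ℝ) (hε : 0 < ε) :
    ∃ μ ν : Measure ℝ, IsProbabilityMeasure μ ∧ IsProbabilityMeasure ν ∧
      μ (Set.Iio 0) = 0 ∧ ν (Set.Iio 0) = 0 ∧
      Integrable (fun z : ℝ × ℝ => max z.1 z.2) (μ.prod ν) ∧
      0 < optWelfare μ ν ∧
      ∀ q : ℝ, 0 ≤ q → welfare μ ν q ≤ (r + ε) * optWelfare μ ν := by
  classical
  have hpnn : ∀ i, 0 ≤ p i := fun i => hp0.trans (hp.monotone (Fin.zero_le i))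
  set x : Fin (n + 1) → ℝ := fun i => p i + ε with hx
  have hxnn : ∀ i, 0 ≤ x i := fun i => by have := hpnn i; simp only [hx]; linarith
  set μ : Measure ℝ := ∑ i, ENNReal.ofReal (s i) • Measure.dirac (x i) with hμ
  set ν : Measure ℝ := ∑ j, ENNReal.ofReal (b j) • Measure.dirac (p j) with hν
  -- the product measure as a finite sum of Dirac measures
  have hprod : μ.prod ν = ∑ ij : Fin (n + 1) × Fin (n + 1),
      ENNReal.ofReal (s ij.1 * b ij.2) • Measure.dirac ((x ij.1, p ij.2) : ℝ × ℝ) := by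
    rw [hμ, hν, aux_prod_finsum, Fintype.sum_prod_type]
    exact Finset.sum_congr rfl fun i _ => Finset.sum_congr rfl fun j _ => by
      rw [ENNReal.ofReal_mul (hs i)]
  have hint : ∀ f : ℝ × ℝ → ℝ,
      ∫ a, f a ∂(μ.prod ν) = ∑ i, ∑ j, s i * b j * f (x i, p j) := by
    intro f
    rw [hprod, aux_integral_finsum_dirac _ (fun ij => mul_nonneg (hs _) (hb _)) _ f,
      Fintype.sum_prod_type]
  -- the maximum property, in `ite` form
  have hrge : ∀ t : Fin (n + 1), ∑ i, s i * p i +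
      ∑ i, (if i ≤ t then ∑ j, (if t < j then s i * b j * (p j - p i) else 0) else 0) ≤ r := by
    intro t
    have := hr.2 ⟨t, rfl⟩
    simpa only [Finset.sum_filter] using this
  have hsp_nn : 0 ≤ ∑ i, s i * p i :=
    Finset.sum_nonneg fun i _ => mul_nonneg (hs i) (hpnn i)
  have hsum_p_le : ∑ i, s i * p i ≤ r := by
    have h := hrge (Fin.last n)
    have hz : ∑ i : Fin (n + 1), (if i ≤ Fin.last n then
        ∑ j : Fin (n + 1), (if Fin.last n < j then s i * b j * (p j - p i) else 0) else 0) = 0 :=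
      Finset.sum_eq_zero fun i _ => by
        rw [if_pos (Fin.le_last i)]
        exact Finset.sum_eq_zero fun j _ => if_neg (not_lt.2 (Fin.le_last j))
    rw [hz, add_zero] at h
    exact h
  have hr0 : 0 ≤ r := hsp_nn.trans hsum_p_le
  -- basic measure facts
  have hdir0 : ∀ a : ℝ, 0 ≤ a → Measure.dirac a (Set.Iio 0) = 0 := fun a ha => by
    rw [Measure.dirac_apply' _ measurableSet_Iio,
      Set.indicator_of_notMem (by simpa using not_lt.2 ha)]
  have hμprob : IsProbabilityMeasure μ := by
    constructor
    rw [hμ, Measure.finset_sum_apply]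
    simp only [Measure.smul_apply, measure_univ, smul_eq_mul, mul_one]
    rw [← ENNReal.ofReal_sum_of_nonneg (fun i _ => hs i), hs1, ENNReal.ofReal_one]
  have hνprob : IsProbabilityMeasure ν := by
    constructor
    rw [hν, Measure.finset_sum_apply]
    simp only [Measure.smul_apply, measure_univ, smul_eq_mul, mul_one]
    rw [← ENNReal.ofReal_sum_of_nonneg (fun i _ => hb i), hb1, ENNReal.ofReal_one]
  have hμ0 : μ (Set.Iio 0) = 0 := by
    rw [hμ, Measure.finset_sum_apply]
    exact Finset.sum_eq_zero fun i _ => by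
      simp [Measure.smul_apply, hdir0 (x i) (hxnn i)]
  have hν0 : ν (Set.Iio 0) = 0 := by
    rw [hν, Measure.finset_sum_apply]
    exact Finset.sum_eq_zero fun j _ => by
      simp [Measure.smul_apply, hdir0 (p j) (hpnn j)]
  have hintg : Integrable (fun z : ℝ × ℝ => max z.1 z.2) (μ.prod ν) := by
    rw [hprod]
    exact aux_integrable_finsum_dirac _ (fun _ => ENNReal.ofReal_ne_top) _ _
  -- optimal welfare
  have hOPT : optWelfare μ ν = ∑ i, ∑ j, s i * b j * max (x i) (p j) :=
    hint fun z => max z.1 z.2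
  have hOPT1 : 1 ≤ optWelfare μ ν := by
    rw [hOPT]
    refine hfeas.trans (Finset.sum_le_sum fun i _ => Finset.sum_le_sum fun j _ => ?_)
    refine mul_le_mul_of_nonneg_left ?_ (mul_nonneg (hs i) (hb j))
    exact max_le_max (by simp only [hx]; linarith) le_rfl
  refine ⟨μ, ν, hμprob, hνprob, hμ0, hν0, hintg, by linarith, fun q hq => ?_⟩
  -- welfare at price q
  have hW : welfare μ ν q = ∑ i, ∑ j, s i * b j * x i
      + ∑ i, ∑ j, s i * b j * (if x i ≤ q ∧ q ≤ p j then p j - x i else 0) := by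
    rw [welfare, hint]
    rw [← Finset.sum_add_distrib]
    refine Finset.sum_congr rfl fun i _ => ?_
    rw [← Finset.sum_add_distrib]
    exact Finset.sum_congr rfl fun j _ => by ring
  have h1 : ∑ i, ∑ j, s i * b j * x i = ∑ i, s i * p i + ε := by
    have hrow : ∀ i : Fin (n + 1), ∑ j, s i * b j * x i = s i * x i := fun i => by
      calc ∑ j, s i * b j * x i = ∑ j, (s i * x i) * b j :=
            Finset.sum_congr rfl fun j _ => by ring
        _ = (s i * x i) * ∑ j, b j := (Finset.mul_sum _ _ _).symm
        _ = s i * x i := by rw [hb1, mul_one]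
    rw [Finset.sum_congr rfl fun i _ => hrow i]
    calc ∑ i, s i * x i = ∑ i, (s i * p i + s i * ε) :=
          Finset.sum_congr rfl fun i _ => by simp only [hx]; ring
      _ = ∑ i, s i * p i + (∑ i, s i) * ε := by
          rw [Finset.sum_add_distrib, Finset.sum_mul]
      _ = ∑ i, s i * p i + ε := by rw [hs1, one_mul]
  have hWr : welfare μ ν q ≤ r + ε := by
    by_cases hA : (Finset.univ.filter fun i : Fin (n + 1) => x i ≤ q).Nonempty
    · set t : Fin (n + 1) := (Finset.univ.filter fun i : Fin (n + 1) => x i ≤ q).max' hA with ht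
      have htq : x t ≤ q :=
        (Finset.mem_filter.1 (Finset.max'_mem _ hA)).2
      have key : ∀ i j : Fin (n + 1),
          s i * b j * (if x i ≤ q ∧ q ≤ p j then p j - x i else 0)
            ≤ (if i ≤ t then (if t < j then s i * b j * (p j - p i) else 0) else 0) := by
        intro i j
        by_cases hc : x i ≤ q ∧ q ≤ p j
        · have hit : i ≤ t := Finset.le_max' _ i (Finset.mem_filter.2 ⟨Finset.mem_univ _, hc.1⟩)
          have htj : t < j := by
            refine hp.lt_iff_lt.1 ?_
            have h1 : p t + ε ≤ q := htq
            have h2 : q ≤ p j := hc.2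
            linarith
          rw [if_pos hc, if_pos hit, if_pos htj]
          refine mul_le_mul_of_nonneg_left ?_ (mul_nonneg (hs i) (hb j))
          simp only [hx]; linarith
        · rw [if_neg hc, mul_zero]
          by_cases h1 : i ≤ t
          · rw [if_pos h1]
            by_cases h2 : t < j
            · rw [if_pos h2]
              have hpi : p i ≤ p t := hp.monotone h1
              have hpj : p t < p j := hp h2
              exact mul_nonneg (mul_nonneg (hs i) (hb j)) (by linarith)
            · rw [if_neg h2]
          · rw [if_neg h1]
      have hT : ∑ i, ∑ j, s i * b j * (if x i ≤ q ∧ q ≤ p j then p j - x i else 0)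
          ≤ ∑ i, (if i ≤ t then ∑ j, (if t < j then s i * b j * (p j - p i) else 0) else 0) := by
        refine Finset.sum_le_sum fun i _ => ?_
        by_cases h1 : i ≤ t
        · rw [if_pos h1]
          refine Finset.sum_le_sum fun j _ => ?_
          have := key i j
          rwa [if_pos h1] at this
        · rw [if_neg h1]
          refine (Finset.sum_le_sum fun j _ => ?_).trans_eq
            (Finset.sum_const_zero (s := Finset.univ))
          have := key i j
          rwa [if_neg h1] at this
      have := hrge t
      rw [hW, h1]
      linarith
    · have hT0 : ∑ i, ∑ j, s i * b j * (if x i ≤ q ∧ q ≤ p j then p j - x i else 0) = 0 := by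
        refine Finset.sum_eq_zero fun i _ => Finset.sum_eq_zero fun j _ => ?_
        have hix : ¬ x i ≤ q := by
          intro h
          exact hA ⟨i, Finset.mem_filter.2 ⟨Finset.mem_univ _, h⟩⟩
        rw [if_neg (fun hc => hix hc.1), mul_zero]
      rw [hW, h1, hT0]
      linarith
  calc welfare μ ν q ≤ r + ε := hWr
    _ = (r + ε) * 1 := (mul_one _).symm
    _ ≤ (r + ε) * optWelfare μ ν :=
        mul_le_mul_of_nonneg_left hOPT1 (by linarith)
end

section
/- For every instance I = (F_S, F_B) of bilateral trade in which F_S and F_B have finite first moments, letting μ = E_{S ~ F_S}[S], the mechanism M_S that draws x uniformly from [0,3] and posts the price x·μ satisfies (1/3)·∫₀³ W(I, x·μ) dx ≥ (2/3)·OPT(I). -/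
/-!
Fix the values `(s, b)` and write `m = E[S]`. The price `x m` lets the buyer trade exactly when
`x ∈ [s/m, b/m]`, so after normalising `m = 1` the integral over `x ∈ [0,3]` of the final owner's
value is `3s + (b - s)·|[0,3] ∩ [s, b]|`. This is not pointwise at least `2 max(s, b)`, but it is
once the correction `(s - 1)·w(b)` is added, with `w = 1` on `[0,3]` and `w(β) = -β` beyond; as the
correction is `S - E[S]` times a function of the independent `B`, its expectation vanishes. If
`m = 0` then `S = 0` almost surely and the price `0` is already optimal.
-/

open MeasureTheory

open Set

noncomputable def tradeValue (p : ℝ) (z : ℝ × ℝ) : ℝ := if z.1 ≤ p ∧ p ≤ z.2 then z.2 else z.1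

lemma welfare_eq_integral_tradeValue (μ ν : Measure ℝ) (p : ℝ) :
    welfare μ ν p = ∫ z, tradeValue p z ∂(μ.prod ν) := by
  unfold welfare tradeValue
  congr 1 with z
  split_ifs <;> ring

lemma abs_tradeValue_le (p : ℝ) (z : ℝ × ℝ) : |tradeValue p z| ≤ |z.1| + |z.2| := by
  unfold tradeValue
  split_ifs <;> linarith [abs_nonneg z.1, abs_nonneg z.2]

lemma tradeValue_zero_of_fst_eq_zero {z : ℝ × ℝ} (h : z.1 = 0) : tradeValue 0 z = max z.1 z.2 := by
  unfold tradeValue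
  rw [h]
  split_ifs with hb
  · exact (max_eq_right hb.2).symm
  · exact (max_eq_left (not_le.1 fun h' => hb ⟨le_rfl, h'⟩).le).symm

lemma tradeValue_eq_add_indicator (p : ℝ) (z : ℝ × ℝ) :
    tradeValue p z = z.1 + (Icc z.1 z.2).indicator (fun _ => z.2 - z.1) p := by
  unfold tradeValue indicator
  simp only [mem_Icc]
  split_ifs <;> ring

lemma mul_tradeValue_div {m : ℝ} (hm : 0 < m) (x : ℝ) (z : ℝ × ℝ) :
    m * tradeValue x (z.1 / m, z.2 / m) = tradeValue (x * m) z := by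
  unfold tradeValue
  simp only [div_le_iff₀ hm, le_div_iff₀ hm]
  split_ifs <;> field_simp

lemma intervalIntegral_indicator_Icc {a c : ℝ} (hac : a ≤ c) (α β k : ℝ) :
    ∫ x in a..c, (Icc α β).indicator (fun _ => k) x = max (min c β - max a α) 0 * k := by
  have hIoc : volume.real (Ioc a c ∩ Icc α β) = volume.real (Icc a c ∩ Icc α β) :=
    measureReal_congr (Ioc_ae_eq_Icc.inter (ae_eq_refl _))
  rw [intervalIntegral.integral_of_le hac, ← integral_indicator measurableSet_Ioc,
    indicator_indicator, integral_indicator_const _ (measurableSet_Ioc.inter measurableSet_Icc),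
    hIoc, Icc_inter_Icc, Real.volume_real_Icc, smul_eq_mul]

lemma intervalIntegral_tradeValue {a c : ℝ} (hac : a ≤ c) (z : ℝ × ℝ) :
    ∫ x in a..c, tradeValue x z = (c - a) * z.1 + max (min c z.2 - max a z.1) 0 * (z.2 - z.1) := by
  have hind : IntervalIntegrable ((Icc z.1 z.2).indicator fun _ => z.2 - z.1) volume a c :=
    ⟨(integrableOn_const measure_Ioc_lt_top.ne).indicator measurableSet_Icc,
      (integrableOn_const measure_Ioc_lt_top.ne).indicator measurableSet_Icc⟩
  simp_rw [tradeValue_eq_add_indicator]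
  rw [intervalIntegral.integral_add intervalIntegrable_const hind, intervalIntegral.integral_const,
    intervalIntegral_indicator_Icc hac, smul_eq_mul]

noncomputable def correctionWeight (β : ℝ) : ℝ := if β ≤ 3 then 1 else -β

lemma two_mul_max_add_le_integral_tradeValue {σ β : ℝ} (hσ : 0 ≤ σ) :
    2 * max σ β + (σ - 1) * correctionWeight β ≤ ∫ x in (0:ℝ)..3, tradeValue x (σ, β) := by
  rw [intervalIntegral_tradeValue zero_le_three, sub_zero, max_eq_right hσ, correctionWeight]
  dsimp only
  split_ifs with hβ
  · rcases le_total σ β with h | h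
    · rw [max_eq_right h, min_eq_right hβ, max_eq_left (by linarith)]
      nlinarith [sq_nonneg (β - σ - 1)]
    · rw [max_eq_left h, min_eq_right hβ, max_eq_right (by linarith)]
      linarith
  · rcases le_total σ β with h | h
    · rw [max_eq_right h, min_eq_left (by linarith)]
      rcases le_total σ 3 with h3 | h3
      · rw [max_eq_left (by linarith)]; nlinarith
      · rw [max_eq_right (by linarith)]; nlinarith
    · rw [max_eq_left h, min_eq_left (by linarith), max_eq_right (by linarith)]
      nlinarith

lemma two_mul_max_add_le_integral_tradeValue_mul {m : ℝ} (hm : 0 < m) {z : ℝ × ℝ}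
    (hz : 0 ≤ z.1) :
    2 * max z.1 z.2 + (z.1 - m) * correctionWeight (z.2 / m) ≤
      ∫ x in (0:ℝ)..3, tradeValue (x * m) z := by
  have h := mul_le_mul_of_nonneg_left
    (two_mul_max_add_le_integral_tradeValue (div_nonneg hz hm.le) (β := z.2 / m)) hm.le
  simp_rw [← intervalIntegral.integral_const_mul, mul_tradeValue_div hm] at h
  refine le_of_eq_of_le ?_ h
  have hmax : max z.1 z.2 = m * max (z.1 / m) (z.2 / m) := by
    rw [mul_max_of_nonneg _ _ hm.le, mul_div_cancel₀ _ hm.ne', mul_div_cancel₀ _ hm.ne']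
  have hs : z.1 - m = m * (z.1 / m - 1) := by field_simp
  rw [hmax, hs]
  ring

lemma integral_prod_sub_mean_mul_eq_zero {μ ν : Measure ℝ} [IsProbabilityMeasure μ]
    [SFinite ν] (hμi : Integrable id μ) {m : ℝ} (hmean : ∫ s, s ∂μ = m) (g : ℝ → ℝ) :
    ∫ z, (z.1 - m) * g z.2 ∂(μ.prod ν) = 0 := by
  rw [integral_prod_mul (fun s => s - m) g, integral_sub (f := fun s => s) hμi
    (integrable_const _), integral_const, hmean]
  simp

lemma welfare_zero_eq_optWelfare {μ ν : Measure ℝ} (h : ∀ᵐ s ∂μ, s = 0) :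
    welfare μ ν 0 = optWelfare μ ν := by
  rw [welfare_eq_integral_tradeValue, optWelfare]
  refine integral_congr_ae ?_
  filter_upwards [Measure.quasiMeasurePreserving_fst.ae h] with z hz
  exact tradeValue_zero_of_fst_eq_zero hz

lemma optWelfare_nonneg_s7 {μ ν : Measure ℝ} (h : ∀ᵐ s ∂μ, 0 ≤ s) : 0 ≤ optWelfare μ ν := by
  refine integral_nonneg_of_ae ?_
  filter_upwards [Measure.quasiMeasurePreserving_fst.ae h] with z hz
  exact hz.trans (le_max_left _ _)

section Integrability

variable {μ ν : Measure ℝ} [IsFiniteMeasure μ] [IsFiniteMeasure ν]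

lemma integrable_abs_fst_add_abs_snd (hμi : Integrable id μ) (hνi : Integrable id ν) :
    Integrable (fun z : ℝ × ℝ => |z.1| + |z.2|) (μ.prod ν) :=
  (hμi.abs.comp_fst ν).add (hνi.abs.comp_snd μ)

lemma integrable_max_fst_snd (hμi : Integrable id μ) (hνi : Integrable id ν) :
    Integrable (fun z : ℝ × ℝ => max z.1 z.2) (μ.prod ν) := by
  refine (integrable_abs_fst_add_abs_snd hμi hνi).mono' (by fun_prop) (ae_of_all _ fun z => ?_)
  rw [Real.norm_eq_abs]
  exact abs_max_le_max_abs_abs.trans (max_le_add_of_nonneg (abs_nonneg _) (abs_nonneg _))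

lemma integrable_uncurry_tradeValue (hμi : Integrable id μ) (hνi : Integrable id ν)
    {p : ℝ → ℝ} (hp : Measurable p) (ρ : Measure ℝ) [IsFiniteMeasure ρ] :
    Integrable (Function.uncurry fun x z => tradeValue (p x) z) (ρ.prod (μ.prod ν)) := by
  have hmeas : Measurable (Function.uncurry fun x z => tradeValue (p x) z) :=
    Measurable.ite ((measurableSet_le measurable_snd.fst (hp.comp measurable_fst)).inter
      (measurableSet_le (hp.comp measurable_fst) measurable_snd.snd))
      measurable_snd.snd measurable_snd.fst
  exact ((integrable_abs_fst_add_abs_snd hμi hνi).comp_snd ρ).mono' hmeas.aestronglyMeasurable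
    (ae_of_all _ fun q => abs_tradeValue_le _ _)

lemma intervalIntegral_welfare_eq_integral (hμi : Integrable id μ) (hνi : Integrable id ν)
    {p : ℝ → ℝ} (hp : Measurable p) {a c : ℝ} (hac : a ≤ c) :
    ∫ x in a..c, welfare μ ν (p x) = ∫ z, (∫ x in a..c, tradeValue (p x) z) ∂(μ.prod ν) := by
  simp_rw [intervalIntegral.integral_of_le hac, welfare_eq_integral_tradeValue]
  exact integral_integral_swap (integrable_uncurry_tradeValue hμi hνi hp _)

lemma integrable_intervalIntegral_tradeValue (hμi : Integrable id μ) (hνi : Integrable id ν)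
    {p : ℝ → ℝ} (hp : Measurable p) {a c : ℝ} (hac : a ≤ c) :
    Integrable (fun z => ∫ x in a..c, tradeValue (p x) z) (μ.prod ν) := by
  simp_rw [intervalIntegral.integral_of_le hac]
  exact (integrable_uncurry_tradeValue hμi hνi hp _).integral_prod_right

lemma integrable_correctionWeight_div {m : ℝ} (hm : 0 < m) (hνi : Integrable id ν) :
    Integrable (fun b => correctionWeight (b / m)) ν := by
  refine ((integrable_const 1).add (hνi.abs.div_const m)).mono'
    (Measurable.ite (measurableSet_le (by fun_prop) measurable_const) measurable_const
      (by fun_prop)).aestronglyMeasurable (ae_of_all _ fun b => ?_)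
  rw [Real.norm_eq_abs, Pi.add_apply, id, correctionWeight]
  split_ifs
  · rw [abs_one]
    linarith [div_nonneg (abs_nonneg b) hm.le]
  · rw [abs_neg, abs_div, abs_of_pos hm]
    linarith

end Integrability

theorem stmt_7_general (μ ν : Measure ℝ) [IsProbabilityMeasure μ] [IsProbabilityMeasure ν]
    (hμ : μ (Set.Iio 0) = 0)
    (hμi : Integrable id μ) (hνi : Integrable id ν) :
    (2 / 3) * optWelfare μ ν ≤ (1 / 3) * ∫ x in (0:ℝ)..3, welfare μ ν (x * ∫ s, s ∂μ) := by
  have hS : ∀ᵐ s ∂μ, 0 ≤ s := by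
    filter_upwards [measure_eq_zero_iff_ae_notMem.1 hμ] with s hs
    simpa using hs
  generalize hmean : ∫ s, s ∂μ = m
  obtain hm | hm := (hmean ▸ integral_nonneg_of_ae hS).eq_or_lt
  · have hS0 : ∀ᵐ s ∂μ, s = 0 :=
      (integral_eq_zero_iff_of_nonneg_ae hS hμi).1 (hmean.trans hm.symm)
    simp only [← hm, mul_zero, welfare_zero_eq_optWelfare hS0, intervalIntegral.integral_const,
      smul_eq_mul]
    linarith [optWelfare_nonneg_s7 (ν := ν) hS]
  have hcorr : Integrable (fun z : ℝ × ℝ => (z.1 - m) * correctionWeight (z.2 / m)) (μ.prod ν) :=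
    (hμi.sub (integrable_const m)).mul_prod (integrable_correctionWeight_div hm hνi)
  suffices 2 * optWelfare μ ν ≤ ∫ x in (0:ℝ)..3, welfare μ ν (x * m) by linarith
  calc 2 * optWelfare μ ν
      = ∫ z, (2 * max z.1 z.2 + (z.1 - m) * correctionWeight (z.2 / m)) ∂(μ.prod ν) := by
        rw [integral_add ((integrable_max_fst_snd hμi hνi).const_mul 2) hcorr, integral_const_mul,
          integral_prod_sub_mean_mul_eq_zero hμi hmean (fun b => correctionWeight (b / m)),
          add_zero, optWelfare]
    _ ≤ ∫ z, (∫ x in (0:ℝ)..3, tradeValue (x * m) z) ∂(μ.prod ν) := by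
        refine integral_mono_ae (((integrable_max_fst_snd hμi hνi).const_mul 2).add hcorr)
          (integrable_intervalIntegral_tradeValue hμi hνi (by fun_prop) zero_le_three) ?_
        filter_upwards [Measure.quasiMeasurePreserving_fst.ae hS] with z hz
        exact two_mul_max_add_le_integral_tradeValue_mul hm hz
    _ = ∫ x in (0:ℝ)..3, welfare μ ν (x * m) :=
        (intervalIntegral_welfare_eq_integral hμi hνi (by fun_prop) zero_le_three).symm

/-- The mechanism `M_S` that draws `x` uniformly from `[0,3]` and posts the price
`x · E[S]` achieves at least `2/3` of the optimal welfare on every instance with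
finite first moments. -/
theorem stmt_7 (μ ν : Measure ℝ) [IsProbabilityMeasure μ] [IsProbabilityMeasure ν]
    (hμ : μ (Set.Iio 0) = 0) (hν : ν (Set.Iio 0) = 0)
    (hμi : Integrable id μ) (hνi : Integrable id ν) :
    (2 / 3) * optWelfare μ ν ≤ (1 / 3) * ∫ x in (0:ℝ)..3, welfare μ ν (x * ∫ s, s ∂μ) :=
  stmt_7_general μ ν hμ hμi hνi
end

section
/- Let P_B be the Borel probability measure on ℝ whose cumulative distribution function G satisfies G(x) = 0 for x < 0, G(x) = x/(3−3x) for 0 ≤ x ≤ 1/2, G(x) = (4x−1)/3 for 1/2 < x ≤ 2/3, G(x) = (x+1)/3 for 2/3 < x ≤ 2, and G(x) = 1 for x > 2. For every instance I = (F_S, F_B) of bilateral trade in which F_S and F_B have finite first moments, letting μ = E_{B ~ F_B}[B], the mechanism M_B that draws x ~ P_B and posts the price x·μ satisfies ∫ W(I, x·μ) dP_B(x) ≥ (2/3)·OPT(I). -/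
/-!
Write `m = E[B]`. Since `OPT = E[S] + E[(B - S)⁺]` and the mechanism earns
`E[S] + E_x E[(B - S) 1{S ≤ x m ≤ B}]`, it suffices that
`2 E[(B - S)⁺] ≤ E[S] + 3 E_x E[(B - S) 1{S ≤ x m ≤ B}]`.
For values `s ≤ b` the probability that `s ≤ x m ≤ b` is at least `G(b/m) - G(s/m)`, so it
suffices to integrate an inequality in `σ = s/m` and `α = b/m`. That inequality fails pointwise,
but it holds after adding `3 β(σ) (1 - α)` with `β = (1/3 - G)⁺`, a term of mean zero because
`E[α] = 1`; checking it is a case analysis over the pieces of `G`.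
-/

open MeasureTheory

open Set

noncomputable def priceCdf (x : ℝ) : ℝ :=
  if x < 0 then 0
  else if x ≤ 1 / 2 then x / (3 - 3 * x)
  else if x ≤ 2 / 3 then (4 * x - 1) / 3
  else if x ≤ 2 then (x + 1) / 3
  else 1

theorem priceCdf_of_nonneg_of_le_half {x : ℝ} (h₀ : 0 ≤ x) (h₁ : x ≤ 1 / 2) :
    priceCdf x = x / (3 - 3 * x) := by
  rw [priceCdf, if_neg h₀.not_gt, if_pos h₁]

theorem priceCdf_of_half_lt_of_le_two_thirds {x : ℝ} (h₀ : 1 / 2 < x) (h₁ : x ≤ 2 / 3) :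
    priceCdf x = (4 * x - 1) / 3 := by
  rw [priceCdf, if_neg (by linarith), if_neg h₀.not_ge, if_pos h₁]

theorem priceCdf_of_two_thirds_lt_of_le_two {x : ℝ} (h₀ : 2 / 3 < x) (h₁ : x ≤ 2) :
    priceCdf x = (x + 1) / 3 := by
  rw [priceCdf, if_neg (by linarith), if_neg (by linarith), if_neg h₀.not_ge, if_pos h₁]

theorem priceCdf_of_two_lt {x : ℝ} (h : 2 < x) : priceCdf x = 1 := by
  rw [priceCdf, if_neg (by linarith), if_neg (by linarith), if_neg (by linarith), if_neg h.not_ge]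

theorem priceCdf_nonneg (x : ℝ) : 0 ≤ priceCdf x := by
  unfold priceCdf
  split_ifs with h₀ h₁
  · exact le_rfl
  · exact div_nonneg (not_lt.1 h₀) (by linarith)
  · linarith [not_le.1 h₁]
  · linarith [not_le.1 h₁]
  · norm_num

theorem measurable_priceCdf : Measurable priceCdf :=
  Measurable.ite measurableSet_Iio measurable_const <|
    Measurable.ite measurableSet_Iic (by fun_prop) <|
    Measurable.ite measurableSet_Iic (by fun_prop) <|
    Measurable.ite measurableSet_Iic (by fun_prop) measurable_const

/-- The Lagrange multiplier of the constraint `E[B / m] = 1` at the normalized seller value `σ`. -/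
noncomputable def meanMultiplier (σ : ℝ) : ℝ := max (1 / 3 - priceCdf σ) 0

theorem meanMultiplier_of_nonneg_of_le_half {σ : ℝ} (h₀ : 0 ≤ σ) (h₁ : σ ≤ 1 / 2) :
    meanMultiplier σ = 1 / 3 - priceCdf σ := by
  refine max_eq_left ?_
  rw [priceCdf_of_nonneg_of_le_half h₀ h₁, sub_nonneg, div_le_iff₀ (by linarith)]
  linarith

theorem meanMultiplier_of_half_lt {σ : ℝ} (h : 1 / 2 < σ) : meanMultiplier σ = 0 := by
  refine max_eq_right (sub_nonpos.2 ?_)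
  rcases le_or_gt σ (2 / 3) with h₁ | h₁
  · rw [priceCdf_of_half_lt_of_le_two_thirds h h₁]; linarith
  rcases le_or_gt σ 2 with h₂ | h₂
  · rw [priceCdf_of_two_thirds_lt_of_le_two h₁ h₂]; linarith
  · rw [priceCdf_of_two_lt h₂]; norm_num

theorem meanMultiplier_nonneg (σ : ℝ) : 0 ≤ meanMultiplier σ := le_max_right _ _

theorem meanMultiplier_le (σ : ℝ) : meanMultiplier σ ≤ 1 / 3 :=
  max_le (by linarith [priceCdf_nonneg σ]) (by norm_num)

theorem measurable_meanMultiplier : Measurable meanMultiplier :=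
  (measurable_const.sub measurable_priceCdf).max measurable_const

theorem normalized_bound_of_ge {σ α : ℝ} (hα : 0 ≤ α) (hασ : α ≤ σ) :
    3 * meanMultiplier σ * α ≤ σ * α + 3 * meanMultiplier σ := by
  rcases le_or_gt σ (1 / 2) with hσ | hσ
  · nlinarith [meanMultiplier_nonneg σ]
  · rw [meanMultiplier_of_half_lt hσ]; nlinarith

/-- `normalized_bound_of_le` for `σ ≤ 1/2`, multiplied by `1 - σ` to clear the denominator of
`priceCdf σ`. -/
theorem normalized_bound_of_le_of_le_half {σ α : ℝ} (h₀ : 0 ≤ σ) (h₁ : σ ≤ 1 / 2) (hσα : σ ≤ α) :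
    0 ≤ (1 - σ) * (σ * α + 3 * (α - σ) * priceCdf α - 2 * (α - σ)) + (1 - 2 * σ) * (1 - α)
      - σ * (α - σ) := by
  rcases le_or_gt α (1 / 2) with hα | hα
  · have hpos : 0 < 1 - α := by linarith
    have hG : 3 * priceCdf α * (1 - α) = α := by
      rw [priceCdf_of_nonneg_of_le_half (h₀.trans hσα) hα]; field_simp
    refine nonneg_of_mul_nonneg_right ?_ hpos
    rw [show (1 - α) * ((1 - σ) * (σ * α + 3 * (α - σ) * priceCdf α - 2 * (α - σ))
        + (1 - 2 * σ) * (1 - α) - σ * (α - σ)) = (1 - α) * ((1 - σ) * (σ * α - 2 * (α - σ))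
        + (1 - 2 * σ) * (1 - α) - σ * (α - σ)) + (1 - σ) * (α - σ) * α by
      linear_combination (1 - σ) * (α - σ) * hG]
    have h₂ : 0 ≤ 2 - 4 * α + α ^ 2 := by nlinarith
    have h₃ : 0 ≤ 1 - α - α ^ 2 := by nlinarith
    nlinarith [sq_nonneg (2 * α - 1), mul_nonneg (mul_nonneg h₀ (h₀.trans hσα)) h₂,
      mul_nonneg (mul_nonneg h₀ (sub_nonneg.2 hσα)) h₃]
  rcases le_or_gt α (2 / 3) with hα₁ | hα₁
  · rw [priceCdf_of_half_lt_of_le_two_thirds hα hα₁]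
    nlinarith [sq_nonneg (2 * α - 1), sq_nonneg (α - 11 / 16),
      mul_nonneg (mul_nonneg h₀ (by linarith : (0:ℝ) ≤ 1 / 2 - σ))
        (by linarith : (0:ℝ) ≤ 2 - 3 * α),
      mul_nonneg (mul_nonneg (by linarith : (0:ℝ) ≤ 1 / 2 - σ) (by linarith : (0:ℝ) ≤ α))
        (by linarith : (0:ℝ) ≤ α - 1 / 2),
      mul_nonneg h₀ (by linarith : (0:ℝ) ≤ α - 1 / 2)]
  rcases le_or_gt α 2 with hα₂ | hα₂
  · rw [priceCdf_of_two_thirds_lt_of_le_two hα₁ hα₂]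
    nlinarith [mul_nonneg (sq_nonneg (1 - α)) (by linarith : (0:ℝ) ≤ 1 - σ)]
  · rw [priceCdf_of_two_lt hα₂]
    nlinarith [mul_nonneg (mul_nonneg h₀ (by linarith : (0:ℝ) ≤ 1 - σ)) (by linarith : (0:ℝ) ≤ α),
      mul_nonneg (by linarith : (0:ℝ) ≤ 1 - σ) (by linarith : (0:ℝ) ≤ 1 - 2 * σ)]

theorem normalized_bound_of_le_of_half_lt {σ α : ℝ} (h₀ : 1 / 2 < σ) (hσα : σ ≤ α) :
    2 * (α - σ) ≤ σ * α + 3 * (α - σ) * (priceCdf α - priceCdf σ) := by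
  rcases le_or_gt σ (2 / 3) with h₁ | h₁
  · rw [priceCdf_of_half_lt_of_le_two_thirds h₀ h₁]
    rcases le_or_gt α (2 / 3) with hα | hα
    · rw [priceCdf_of_half_lt_of_le_two_thirds (h₀.trans_le hσα) hα]
      nlinarith [sq_nonneg (4 * (α - σ) - 3 / 4), mul_nonneg (by linarith : (0:ℝ) ≤ σ - 1 / 2)
        (sub_nonneg.2 hσα)]
    rcases le_or_gt α 2 with hα₂ | hα₂
    · rw [priceCdf_of_two_thirds_lt_of_le_two hα hα₂]; nlinarith [sq_nonneg (α - 2 * σ)]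
    · rw [priceCdf_of_two_lt hα₂]
      nlinarith [mul_nonneg (by linarith : (0:ℝ) ≤ α - 2) (by linarith : (0:ℝ) ≤ 6 - 9 * σ),
        sq_nonneg (1 - σ)]
  rcases le_or_gt σ 2 with h₂ | h₂
  · rw [priceCdf_of_two_thirds_lt_of_le_two h₁ h₂]
    rcases le_or_gt α 2 with hα₂ | hα₂
    · rw [priceCdf_of_two_thirds_lt_of_le_two (h₁.trans_le hσα) hα₂]
      nlinarith [sq_nonneg (2 * α - 2 - σ)]
    · rw [priceCdf_of_two_lt hα₂]; nlinarith [sq_nonneg σ]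
  · rw [priceCdf_of_two_lt h₂, priceCdf_of_two_lt (h₂.trans_le hσα)]
    nlinarith

theorem normalized_bound_of_le {σ α : ℝ} (h₀ : 0 ≤ σ) (hσα : σ ≤ α) :
    2 * (α - σ) + 3 * meanMultiplier σ * α
      ≤ σ * α + 3 * (α - σ) * (priceCdf α - priceCdf σ) + 3 * meanMultiplier σ := by
  rcases le_or_gt σ (1 / 2) with h₁ | h₁
  · have hG : 3 * priceCdf σ * (1 - σ) = σ := by
      rw [priceCdf_of_nonneg_of_le_half h₀ h₁]; field_simp [(by linarith : (1:ℝ) - σ ≠ 0)]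
    rw [meanMultiplier_of_nonneg_of_le_half h₀ h₁, ← sub_nonneg]
    refine nonneg_of_mul_nonneg_right ?_ (by linarith : (0:ℝ) < 1 - σ)
    linear_combination normalized_bound_of_le_of_le_half h₀ h₁ hσα + (1 - σ) * hG
  · rw [meanMultiplier_of_half_lt h₁]
    linarith [normalized_bound_of_le_of_half_lt h₁ hσα]

theorem pointwise_bound {m s b w : ℝ} (hm : 0 < m) (hs : 0 ≤ s) (hb : 0 ≤ b) (hw : 0 ≤ w)
    (hgain : s ≤ b → (b - s) * (priceCdf (b / m) - priceCdf (s / m)) ≤ w) :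
    2 * max (b - s) 0 + 3 * (meanMultiplier (s / m) * b)
      ≤ s * (b / m) + 3 * w + 3 * (meanMultiplier (s / m) * m) := by
  obtain ⟨σ, rfl⟩ : ∃ σ, s = m * σ := ⟨s / m, by field_simp⟩
  obtain ⟨α, rfl⟩ : ∃ α, b = m * α := ⟨b / m, by field_simp⟩
  have hσ : 0 ≤ σ := nonneg_of_mul_nonneg_right hs hm
  have hα : 0 ≤ α := nonneg_of_mul_nonneg_right hb hm
  simp only [mul_div_cancel_left₀ _ hm.ne'] at hgain ⊢
  rcases le_total σ α with hσα | hασ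
  · have hsb : m * σ ≤ m * α := by gcongr
    rw [max_eq_left (sub_nonneg.2 hsb)]
    nlinarith [mul_le_mul_of_nonneg_left (normalized_bound_of_le hσ hσα) hm.le, hgain hsb]
  · rw [max_eq_right (by nlinarith)]
    nlinarith [mul_le_mul_of_nonneg_left (normalized_bound_of_ge hα hασ) hm.le]

theorem measureReal_Iic_eq_priceCdf (PB : Measure ℝ)
    (hcdf1 : ∀ x : ℝ, 0 ≤ x → x ≤ 1 / 2 → (PB (Iic x)).toReal = x / (3 - 3 * x))
    (hcdf2 : ∀ x : ℝ, 1 / 2 < x → x ≤ 2 / 3 → (PB (Iic x)).toReal = (4 * x - 1) / 3)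
    (hcdf3 : ∀ x : ℝ, 2 / 3 < x → x ≤ 2 → (PB (Iic x)).toReal = (x + 1) / 3)
    (hcdf4 : ∀ x : ℝ, 2 < x → PB (Iic x) = 1) {x : ℝ} (hx : 0 ≤ x) :
    PB.real (Iic x) = priceCdf x := by
  rw [measureReal_def]
  rcases le_or_gt x (1 / 2) with h₁ | h₁
  · rw [hcdf1 x hx h₁, priceCdf_of_nonneg_of_le_half hx h₁]
  rcases le_or_gt x (2 / 3) with h₂ | h₂
  · rw [hcdf2 x h₁ h₂, priceCdf_of_half_lt_of_le_two_thirds h₁ h₂]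
  rcases le_or_gt x 2 with h₃ | h₃
  · rw [hcdf3 x h₂ h₃, priceCdf_of_two_thirds_lt_of_le_two h₂ h₃]
  · rw [hcdf4 x h₃, priceCdf_of_two_lt h₃, ENNReal.toReal_one]

noncomputable def tradeGain (p : ℝ) (z : ℝ × ℝ) : ℝ := if z.1 ≤ p ∧ p ≤ z.2 then z.2 - z.1 else 0

theorem tradeGain_nonneg (p : ℝ) (z : ℝ × ℝ) : 0 ≤ tradeGain p z := by
  unfold tradeGain; split_ifs with h
  · linarith [h.1.trans h.2]
  · exact le_rfl

theorem tradeGain_le (p : ℝ) (z : ℝ × ℝ) : tradeGain p z ≤ max (z.2 - z.1) 0 := by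
  unfold tradeGain; split_ifs
  · exact le_max_left _ _
  · exact le_max_right _ _

theorem measurable_tradeGain : Measurable (Function.uncurry tradeGain) :=
  Measurable.ite ((measurableSet_le measurable_snd.fst measurable_fst).inter
    (measurableSet_le measurable_fst measurable_snd.snd)) (by fun_prop) measurable_const

theorem measureReal_Iic_sub_le_integral_tradeGain (PB : Measure ℝ) [IsFiniteMeasure PB]
    {m s b : ℝ} (hm : 0 < m) (hsb : s ≤ b) :
    (b - s) * (PB.real (Iic (b / m)) - PB.real (Iic (s / m)))
      ≤ ∫ x, tradeGain (x * m) (s, b) ∂PB := by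
  have hset : MeasurableSet {x : ℝ | s ≤ x * m ∧ x * m ≤ b} :=
    (measurableSet_le measurable_const (measurable_id.mul_const m)).inter
      (measurableSet_le (measurable_id.mul_const m) measurable_const)
  have hgain : (fun x => tradeGain (x * m) (s, b))
      = {x : ℝ | s ≤ x * m ∧ x * m ≤ b}.indicator fun _ => b - s := by
    ext x; simp [tradeGain, indicator_apply]
  have hsub : Iic (b / m) \ Iic (s / m) ⊆ {x : ℝ | s ≤ x * m ∧ x * m ≤ b} := by
    rintro x ⟨hxb, hxs⟩
    simp only [mem_Iic, not_le] at hxb hxs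
    exact ⟨((div_lt_iff₀ hm).1 hxs).le, (le_div_iff₀ hm).1 hxb⟩
  rw [hgain, integral_indicator_const _ hset, smul_eq_mul, mul_comm]
  gcongr
  exact (le_measureReal_sdiff).trans (measureReal_mono hsub)

theorem ae_nonneg_of_measure_Iio_eq_zero {μ : Measure ℝ} (h : μ (Iio 0) = 0) : ∀ᵐ x ∂μ, 0 ≤ x :=
  (measure_eq_zero_iff_ae_notMem.1 h).mono fun _ hx => not_lt.1 hx

section

variable {μ ν : Measure ℝ}

theorem integral_fst_prod [SFinite μ] [IsProbabilityMeasure ν] :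
    ∫ z : ℝ × ℝ, z.1 ∂μ.prod ν = ∫ s, s ∂μ := by
  simp [integral_fun_fst (fun s : ℝ => s)]

theorem integrable_posPart_sub [IsFiniteMeasure μ] [IsFiniteMeasure ν] (hμi : Integrable id μ)
    (hνi : Integrable id ν) : Integrable (fun z : ℝ × ℝ => max (z.2 - z.1) 0) (μ.prod ν) :=
  ((hνi.comp_snd μ).sub (hμi.comp_fst ν)).pos_part

theorem integrable_tradeGain [IsFiniteMeasure μ] [IsFiniteMeasure ν] (hμi : Integrable id μ)
    (hνi : Integrable id ν) (p : ℝ) : Integrable (tradeGain p) (μ.prod ν) := by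
  refine (integrable_posPart_sub hμi hνi).mono
    (measurable_tradeGain.comp measurable_prodMk_left).aestronglyMeasurable
    (ae_of_all _ fun z => ?_)
  rw [Real.norm_of_nonneg (tradeGain_nonneg p z), Real.norm_of_nonneg (le_max_right _ _)]
  exact tradeGain_le p z

theorem integrable_tradeGain_prod (PB : Measure ℝ) [IsFiniteMeasure PB] [IsFiniteMeasure μ]
    [IsFiniteMeasure ν] (hμi : Integrable id μ) (hνi : Integrable id ν) (m : ℝ) :
    Integrable (Function.uncurry fun x z => tradeGain (x * m) z) (PB.prod (μ.prod ν)) := by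
  refine ((integrable_posPart_sub hμi hνi).comp_snd PB).mono
    (measurable_tradeGain.comp
      ((measurable_fst.mul_const m).prodMk measurable_snd)).aestronglyMeasurable
    (ae_of_all _ fun q => ?_)
  change ‖tradeGain (q.1 * m) q.2‖ ≤ _
  rw [Real.norm_of_nonneg (tradeGain_nonneg _ _), Real.norm_of_nonneg (le_max_right _ _)]
  exact tradeGain_le _ _

theorem optWelfare_eq [IsFiniteMeasure μ] [IsProbabilityMeasure ν] (hμi : Integrable id μ)
    (hνi : Integrable id ν) :
    optWelfare μ ν = ∫ s, s ∂μ + ∫ z, max (z.2 - z.1) 0 ∂μ.prod ν := by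
  rw [optWelfare, ← integral_fst_prod (ν := ν),
    ← integral_add (f := fun z : ℝ × ℝ => z.1) (hμi.comp_fst ν)
      (integrable_posPart_sub hμi hνi)]
  congr 1 with z
  rcases le_total z.1 z.2 with h | h
  · rw [max_eq_right h, max_eq_left (sub_nonneg.2 h)]; ring
  · rw [max_eq_left h, max_eq_right (sub_nonpos.2 h)]; ring

theorem integral_welfare_eq (PB : Measure ℝ) [IsProbabilityMeasure PB] [IsFiniteMeasure μ]
    [IsProbabilityMeasure ν] (hμi : Integrable id μ) (hνi : Integrable id ν) (m : ℝ) :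
    ∫ x, welfare μ ν (x * m) ∂PB
      = ∫ s, s ∂μ + ∫ x, ∫ z, tradeGain (x * m) z ∂μ.prod ν ∂PB := by
  have hwelfare (p : ℝ) : welfare μ ν p = ∫ s, s ∂μ + ∫ z, tradeGain p z ∂μ.prod ν := by
    rw [welfare, ← integral_fst_prod (ν := ν)]
    exact integral_add (f := fun z : ℝ × ℝ => z.1) (hμi.comp_fst ν)
      (integrable_tradeGain hμi hνi p)
  have hgain : Integrable (fun x => ∫ z, tradeGain (x * m) z ∂μ.prod ν) PB :=
    (integrable_tradeGain_prod PB hμi hνi m).integral_prod_left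
  simp_rw [hwelfare]
  rw [integral_add (integrable_const _) hgain]
  simp

theorem integrable_meanMultiplier_div [IsFiniteMeasure μ] (m : ℝ) :
    Integrable (fun s => meanMultiplier (s / m)) μ := by
  refine Integrable.of_bound
    (measurable_meanMultiplier.comp (measurable_id.div_const m)).aestronglyMeasurable (1 / 3)
    (ae_of_all _ fun s => ?_)
  rw [Real.norm_of_nonneg (meanMultiplier_nonneg _)]
  exact meanMultiplier_le _

/-- The multiplier terms `c s * b` and `c s * m` on the two sides have the same integral, because
`m` is the mean of `ν`. -/
theorem two_mul_integral_posPart_le_of_ae [IsFiniteMeasure μ] [IsProbabilityMeasure ν]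
    (hμi : Integrable id μ) (hνi : Integrable id ν) (hm : ∫ b, b ∂ν ≠ 0) {c : ℝ → ℝ}
    (hc : Integrable c μ) {w : ℝ × ℝ → ℝ} (hw : Integrable w (μ.prod ν))
    (hbound : ∀ᵐ z ∂μ.prod ν, 2 * max (z.2 - z.1) 0 + 3 * (c z.1 * z.2)
      ≤ z.1 * (z.2 / ∫ b, b ∂ν) + 3 * w z + 3 * (c z.1 * ∫ b, b ∂ν)) :
    2 * ∫ z, max (z.2 - z.1) 0 ∂μ.prod ν ≤ ∫ s, s ∂μ + 3 * ∫ z, w z ∂μ.prod ν := by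
  set m := ∫ b, b ∂ν
  have hD := integrable_posPart_sub hμi hνi
  have hcb : Integrable (fun z : ℝ × ℝ => c z.1 * z.2) (μ.prod ν) := hc.mul_prod hνi
  have hcm : Integrable (fun z : ℝ × ℝ => c z.1 * m) (μ.prod ν) := hc.mul_prod (integrable_const m)
  have hsb : Integrable (fun z : ℝ × ℝ => z.1 * (z.2 / m)) (μ.prod ν) :=
    hμi.mul_prod (hνi.div_const m)
  have hsw : Integrable (fun z : ℝ × ℝ => z.1 * (z.2 / m) + 3 * w z) (μ.prod ν) :=
    hsb.add (hw.const_mul 3)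
  have hL : ∫ z : ℝ × ℝ, (2 * max (z.2 - z.1) 0 + 3 * (c z.1 * z.2)) ∂μ.prod ν
      = 2 * ∫ z, max (z.2 - z.1) 0 ∂μ.prod ν + 3 * ((∫ s, c s ∂μ) * m) := by
    rw [integral_add (hD.const_mul 2) (hcb.const_mul 3), integral_const_mul, integral_const_mul,
      integral_prod_mul c (fun b => b)]
  have hR : ∫ z : ℝ × ℝ, (z.1 * (z.2 / m) + 3 * w z + 3 * (c z.1 * m)) ∂μ.prod ν
      = ∫ s, s ∂μ + 3 * ∫ z, w z ∂μ.prod ν + 3 * ((∫ s, c s ∂μ) * m) := by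
    rw [integral_add hsw (hcm.const_mul 3), integral_add hsb (hw.const_mul 3),
      integral_const_mul, integral_const_mul, integral_prod_mul (fun s => s) (· / m),
      integral_prod_mul c (fun _ => m), integral_div, div_self hm]
    simp
  have hmono : 2 * ∫ z, max (z.2 - z.1) 0 ∂μ.prod ν + 3 * ((∫ s, c s ∂μ) * m)
      ≤ ∫ s, s ∂μ + 3 * ∫ z, w z ∂μ.prod ν + 3 * ((∫ s, c s ∂μ) * m) := by
    rw [← hL, ← hR]
    exact integral_mono_ae ((hD.const_mul 2).add (hcb.const_mul 3)) (hsw.add (hcm.const_mul 3))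
      hbound
  linarith

theorem two_mul_integral_posPart_le (PB : Measure ℝ) [IsFiniteMeasure PB] [IsFiniteMeasure μ]
    [IsProbabilityMeasure ν] (hcdf : ∀ x, 0 ≤ x → PB.real (Iic x) = priceCdf x)
    (hμ : μ (Iio 0) = 0) (hν : ν (Iio 0) = 0) (hμi : Integrable id μ) (hνi : Integrable id ν) :
    2 * ∫ z, max (z.2 - z.1) 0 ∂μ.prod ν
      ≤ ∫ s, s ∂μ + 3 * ∫ x, ∫ z, tradeGain (x * ∫ b, b ∂ν) z ∂μ.prod ν ∂PB := by
  set m := ∫ b, b ∂ν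
  have hμ0 := ae_nonneg_of_measure_Iio_eq_zero hμ
  have hν0 := ae_nonneg_of_measure_Iio_eq_zero hν
  have hfst := (Measure.quasiMeasurePreserving_fst (μ := μ) (ν := ν)).ae hμ0
  rcases (integral_nonneg_of_ae hν0 : 0 ≤ m).eq_or_lt with hm | hm
  · have hb : ∀ᵐ b ∂ν, b = 0 := (integral_eq_zero_iff_of_nonneg_ae hν0 hνi).1 hm.symm
    have hD : ∫ z, max (z.2 - z.1) 0 ∂μ.prod ν = 0 := by
      refine integral_eq_zero_of_ae ?_
      filter_upwards [hfst, (Measure.quasiMeasurePreserving_snd (μ := μ)).ae hb] with z hs hb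
      simp [hb, hs]
    have hW : 0 ≤ ∫ x, ∫ z, tradeGain (x * m) z ∂μ.prod ν ∂PB :=
      integral_nonneg fun x => integral_nonneg fun z => tradeGain_nonneg _ _
    linarith [integral_nonneg_of_ae hμ0]
  have hprod := integrable_tradeGain_prod PB hμi hνi m
  rw [integral_integral_swap hprod]
  refine two_mul_integral_posPart_le_of_ae hμi hνi hm.ne' (integrable_meanMultiplier_div m)
    hprod.integral_prod_right ?_
  filter_upwards [hfst, (Measure.quasiMeasurePreserving_snd (μ := μ)).ae hν0] with z hs hb
  refine pointwise_bound hm hs hb (integral_nonneg fun x => tradeGain_nonneg _ _) fun hsb => ?_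
  rw [← hcdf _ (div_nonneg hb hm.le), ← hcdf _ (div_nonneg hs hm.le)]
  exact measureReal_Iic_sub_le_integral_tradeGain PB hm hsb

end

theorem stmt_8_general (PB : Measure ℝ) [IsProbabilityMeasure PB]
    (hcdf1 : ∀ x : ℝ, 0 ≤ x → x ≤ 1 / 2 → (PB (Set.Iic x)).toReal = x / (3 - 3 * x))
    (hcdf2 : ∀ x : ℝ, 1 / 2 < x → x ≤ 2 / 3 → (PB (Set.Iic x)).toReal = (4 * x - 1) / 3)
    (hcdf3 : ∀ x : ℝ, 2 / 3 < x → x ≤ 2 → (PB (Set.Iic x)).toReal = (x + 1) / 3)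
    (hcdf4 : ∀ x : ℝ, 2 < x → PB (Set.Iic x) = 1)
    (μ ν : Measure ℝ) [IsProbabilityMeasure μ] [IsProbabilityMeasure ν]
    (hμ : μ (Set.Iio 0) = 0) (hν : ν (Set.Iio 0) = 0)
    (hμi : Integrable id μ) (hνi : Integrable id ν) :
    (2 / 3) * optWelfare μ ν ≤ ∫ x, welfare μ ν (x * ∫ b, b ∂ν) ∂PB := by
  have hkey := two_mul_integral_posPart_le PB
    (fun _ hx => measureReal_Iic_eq_priceCdf PB hcdf1 hcdf2 hcdf3 hcdf4 hx) hμ hν hμi hνi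
  rw [optWelfare_eq hμi hνi, integral_welfare_eq PB hμi hνi]
  linarith

/-- Let `P_B` be the probability measure on `ℝ` with the cdf `G` given by
`G(x) = 0` for `x < 0`, `G(x) = x/(3−3x)` on `[0,1/2]`, `G(x) = (4x−1)/3` on `(1/2,2/3]`,
`G(x) = (x+1)/3` on `(2/3,2]`, and `G(x) = 1` for `x > 2`. Then the mechanism `M_B`
that draws `x ~ P_B` and posts the price `x · E[B]` obtains at least `2/3` of the
optimal welfare on every instance with finite first moments. -/
theorem stmt_8 (PB : Measure ℝ) [IsProbabilityMeasure PB]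
    (hcdf0 : ∀ x : ℝ, x < 0 → PB (Set.Iic x) = 0)
    (hcdf1 : ∀ x : ℝ, 0 ≤ x → x ≤ 1 / 2 → (PB (Set.Iic x)).toReal = x / (3 - 3 * x))
    (hcdf2 : ∀ x : ℝ, 1 / 2 < x → x ≤ 2 / 3 → (PB (Set.Iic x)).toReal = (4 * x - 1) / 3)
    (hcdf3 : ∀ x : ℝ, 2 / 3 < x → x ≤ 2 → (PB (Set.Iic x)).toReal = (x + 1) / 3)
    (hcdf4 : ∀ x : ℝ, 2 < x → PB (Set.Iic x) = 1)
    (μ ν : Measure ℝ) [IsProbabilityMeasure μ] [IsProbabilityMeasure ν]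
    (hμ : μ (Set.Iio 0) = 0) (hν : ν (Set.Iio 0) = 0)
    (hμi : Integrable id μ) (hνi : Integrable id ν) :
    (2 / 3) * optWelfare μ ν ≤ ∫ x, welfare μ ν (x * ∫ b, b ∂ν) ∂PB :=
  stmt_8_general PB hcdf1 hcdf2 hcdf3 hcdf4 μ ν hμ hν hμi hνi
end

section
/- No fixed-price mechanism that uses only the mean of one side's value distribution can guarantee more than 2/3 of the optimal welfare. Precisely: for every Borel probability measure P on [0,∞) (a price distribution) and every r > 2/3, (i) there exists an instance I = (F_S, F_B) with E_{S ~ F_S}[S] = 1 and 0 < OPT(I) < ∞ such that ∫ W(I,p) dP(p) < r · OPT(I); and (ii) there exists an instance I′ = (F′_S, F′_B) with E_{B ~ F′_B}[B] = 1 and 0 < OPT(I′) < ∞ such that ∫ W(I′,p) dP(p) < r · OPT(I′). -/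
open MeasureTheory

/-!
Fix `P` and `r > 2/3`, and call `[1, ∞)` (seller mean `1`) resp. `[0, 1]` (buyer mean `1`) the
window. If `P` puts mass less than `r` on the window, a deterministic instance that trades only
at prices in the window, and whose gains from trade dwarf the seller's value, already works.

Otherwise `P` puts mass at most `1 - r` outside the window. Let the side with mean `1` be `1/ε`
with probability `ε` and `0` otherwise, and the other side be `1 - ε` resp. `1 + ε`: trade is
then profitable only at prices outside the window. The optimum is about `2`, while `P` obtains
about `1 + (1 - r)`, and `2 - r < 2 r` exactly when `r > 2/3`.
-/

open Measure Set

section TwoPoint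

variable {α : Type*} [MeasurableSpace α]

noncomputable def twoPoint (w : ℝ) (x y : α) : Measure α :=
  ENNReal.ofReal (1 - w) • dirac x + ENNReal.ofReal w • dirac y

lemma isProbabilityMeasure_twoPoint {w : ℝ} (hw₀ : 0 ≤ w) (hw₁ : w ≤ 1) (x y : α) :
    IsProbabilityMeasure (twoPoint w x y) := by
  constructor
  simp only [twoPoint, add_apply, Measure.smul_apply, measure_univ, smul_eq_mul, mul_one]
  rw [← ENNReal.ofReal_add (by linarith) hw₀]
  norm_num

instance (w : ℝ) (x y : α) : IsFiniteMeasure (twoPoint w x y) :=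
  ⟨by simp [twoPoint]⟩

lemma map_twoPoint {β : Type*} [MeasurableSpace β] {f : α → β} (hf : Measurable f)
    (w : ℝ) (x y : α) : (twoPoint w x y).map f = twoPoint w (f x) (f y) := by
  simp [twoPoint, Measure.map_add _ _ hf, Measure.map_smul, map_dirac' hf]

lemma twoPoint_prod_dirac {β : Type*} [MeasurableSpace β] (w : ℝ) (x y : α) (b : β) :
    (twoPoint w x y).prod (dirac b) = twoPoint w (x, b) (y, b) := by
  rw [prod_dirac, map_twoPoint measurable_prodMk_right]

lemma dirac_prod_twoPoint {β : Type*} [MeasurableSpace β] (w : ℝ) (s : α) (x y : β) :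
    (dirac s).prod (twoPoint w x y) = twoPoint w (s, x) (s, y) := by
  rw [dirac_prod, map_twoPoint measurable_prodMk_left]

variable [MeasurableSingletonClass α]

lemma twoPoint_apply_eq_zero (w : ℝ) {x y : α} {s : Set α} (hx : x ∉ s) (hy : y ∉ s) :
    twoPoint w x y s = 0 := by
  simp [twoPoint, dirac_apply, hx, hy]

lemma integrable_twoPoint (w : ℝ) (x y : α) (f : α → ℝ) : Integrable f (twoPoint w x y) :=
  ((integrable_dirac enorm_lt_top).smul_measure ENNReal.ofReal_ne_top).add_measure
    ((integrable_dirac enorm_lt_top).smul_measure ENNReal.ofReal_ne_top)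

lemma integral_twoPoint {w : ℝ} (hw₀ : 0 ≤ w) (hw₁ : w ≤ 1) (x y : α) (f : α → ℝ) :
    ∫ z, f z ∂twoPoint w x y = (1 - w) * f x + w * f y := by
  rw [twoPoint, integral_add_measure
      ((integrable_dirac enorm_lt_top).smul_measure ENNReal.ofReal_ne_top)
      ((integrable_dirac enorm_lt_top).smul_measure ENNReal.ofReal_ne_top),
    integral_smul_measure, integral_smul_measure, integral_dirac, integral_dirac,
    ENNReal.toReal_ofReal (by linarith), ENNReal.toReal_ofReal hw₀, smul_eq_mul, smul_eq_mul]

end TwoPoint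

structure IsValueDistribution (μ : Measure ℝ) : Prop where
  isProbabilityMeasure : IsProbabilityMeasure μ
  Iio_zero : μ (Iio 0) = 0
  integrable_id : Integrable id μ

lemma isValueDistribution_dirac {s : ℝ} (hs : 0 ≤ s) : IsValueDistribution (dirac s) where
  isProbabilityMeasure := inferInstance
  Iio_zero := by simp [hs]
  integrable_id := integrable_dirac enorm_lt_top

lemma isValueDistribution_twoPoint {w x y : ℝ} (hw₀ : 0 ≤ w) (hw₁ : w ≤ 1) (hx : 0 ≤ x)
    (hy : 0 ≤ y) : IsValueDistribution (twoPoint w x y) where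
  isProbabilityMeasure := isProbabilityMeasure_twoPoint hw₀ hw₁ x y
  Iio_zero := twoPoint_apply_eq_zero w (by simpa using hx) (by simpa using hy)
  integrable_id := integrable_twoPoint w x y id

lemma integrable_max_prod {μ ν : Measure ℝ} [IsFiniteMeasure μ] [IsFiniteMeasure ν]
    (hμ : Integrable id μ) (hν : Integrable id ν) :
    Integrable (fun z : ℝ × ℝ => max z.1 z.2) (μ.prod ν) :=
  (hμ.comp_fst ν).sup (hν.comp_snd μ)

structure IsHardInstance (P : Measure ℝ) (r : ℝ) (μ ν : Measure ℝ) : Prop where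
  left : IsValueDistribution μ
  right : IsValueDistribution ν
  optWelfare_pos : 0 < optWelfare μ ν
  integral_welfare_lt : ∫ p, welfare μ ν p ∂P < r * optWelfare μ ν

lemma IsHardInstance.integrable_max {P : Measure ℝ} {r : ℝ} {μ ν : Measure ℝ}
    (h : IsHardInstance P r μ ν) : Integrable (fun z : ℝ × ℝ => max z.1 z.2) (μ.prod ν) :=
  have := h.left.isProbabilityMeasure
  have := h.right.isProbabilityMeasure
  integrable_max_prod h.left.integrable_id h.right.integrable_id

section Welfare

lemma welfare_dirac_dirac (s b p : ℝ) :
    welfare (dirac s) (dirac b) p = s + (Icc s b).indicator (fun _ => b - s) p := by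
  rw [welfare, dirac_prod_dirac, integral_dirac]
  by_cases h : s ≤ p ∧ p ≤ b <;> simp [h]

lemma optWelfare_dirac_dirac (s b : ℝ) : optWelfare (dirac s) (dirac b) = max s b := by
  rw [optWelfare, dirac_prod_dirac, integral_dirac]

variable {w : ℝ}

lemma welfare_twoPoint_dirac (hw₀ : 0 ≤ w) (hw₁ : w ≤ 1) (x y b p : ℝ) :
    welfare (twoPoint w x y) (dirac b) p =
      (1 - w) * welfare (dirac x) (dirac b) p + w * welfare (dirac y) (dirac b) p := by
  simp only [welfare, twoPoint_prod_dirac, integral_twoPoint hw₀ hw₁, dirac_prod_dirac,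
    integral_dirac]

lemma welfare_dirac_twoPoint (hw₀ : 0 ≤ w) (hw₁ : w ≤ 1) (s x y p : ℝ) :
    welfare (dirac s) (twoPoint w x y) p =
      (1 - w) * welfare (dirac s) (dirac x) p + w * welfare (dirac s) (dirac y) p := by
  simp only [welfare, dirac_prod_twoPoint, integral_twoPoint hw₀ hw₁, dirac_prod_dirac,
    integral_dirac]

lemma optWelfare_twoPoint_dirac (hw₀ : 0 ≤ w) (hw₁ : w ≤ 1) (x y b : ℝ) :
    optWelfare (twoPoint w x y) (dirac b) = (1 - w) * max x b + w * max y b := by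
  rw [optWelfare, twoPoint_prod_dirac, integral_twoPoint hw₀ hw₁]

lemma optWelfare_dirac_twoPoint (hw₀ : 0 ≤ w) (hw₁ : w ≤ 1) (s x y : ℝ) :
    optWelfare (dirac s) (twoPoint w x y) = (1 - w) * max s x + w * max s y := by
  rw [optWelfare, dirac_prod_twoPoint, integral_twoPoint hw₀ hw₁]

end Welfare

lemma integrable_welfare_dirac_dirac (P : Measure ℝ) [IsFiniteMeasure P] (s b : ℝ) :
    Integrable (welfare (dirac s) (dirac b)) P := by
  simp only [funext (welfare_dirac_dirac s b)]
  exact (integrable_const s).add ((integrable_const _).indicator measurableSet_Icc)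

section PriceAverage

variable (P : Measure ℝ) [IsProbabilityMeasure P]

lemma integral_welfare_dirac_dirac (s b : ℝ) :
    ∫ p, welfare (dirac s) (dirac b) p ∂P = s + P.real (Icc s b) * (b - s) := by
  simp only [welfare_dirac_dirac]
  rw [integral_add (integrable_const s) ((integrable_const _).indicator measurableSet_Icc),
    integral_const, integral_indicator_const _ measurableSet_Icc]
  simp

variable {w : ℝ}

lemma integral_welfare_twoPoint_dirac (hw₀ : 0 ≤ w) (hw₁ : w ≤ 1) (x y b : ℝ) :
    ∫ p, welfare (twoPoint w x y) (dirac b) p ∂P =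
      (1 - w) * (x + P.real (Icc x b) * (b - x)) + w * (y + P.real (Icc y b) * (b - y)) := by
  simp only [welfare_twoPoint_dirac hw₀ hw₁]
  rw [integral_add ((integrable_welfare_dirac_dirac P x b).const_mul _)
      ((integrable_welfare_dirac_dirac P y b).const_mul _),
    integral_const_mul, integral_const_mul, integral_welfare_dirac_dirac,
    integral_welfare_dirac_dirac]

lemma integral_welfare_dirac_twoPoint (hw₀ : 0 ≤ w) (hw₁ : w ≤ 1) (s x y : ℝ) :
    ∫ p, welfare (dirac s) (twoPoint w x y) p ∂P =
      (1 - w) * (s + P.real (Icc s x) * (x - s)) + w * (s + P.real (Icc s y) * (y - s)) := by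
  simp only [welfare_dirac_twoPoint hw₀ hw₁]
  rw [integral_add ((integrable_welfare_dirac_dirac P s x).const_mul _)
      ((integrable_welfare_dirac_dirac P s y).const_mul _),
    integral_const_mul, integral_const_mul, integral_welfare_dirac_dirac,
    integral_welfare_dirac_dirac]

end PriceAverage

lemma integral_id_twoPoint_zero_inv {ε : ℝ} (hε₀ : 0 < ε) (hε₁ : ε ≤ 1) :
    ∫ x, x ∂twoPoint ε 0 ε⁻¹ = 1 := by
  rw [integral_twoPoint hε₀.le hε₁, mul_inv_cancel₀ hε₀.ne']
  ring

section HardInstances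

variable (P : Measure ℝ) [IsProbabilityMeasure P] {r : ℝ}

lemma isHardInstance_dirac_one_dirac (hQ : P.real (Ici 1) < r) :
    IsHardInstance P r (dirac 1) (dirac (1 + (r - P.real (Ici 1))⁻¹)) := by
  set Q := P.real (Ici 1)
  set b := 1 + (r - Q)⁻¹ with hb
  have hQ₀ : 0 ≤ Q := measureReal_nonneg
  have hb₁ : 1 ≤ b := le_add_of_nonneg_right (inv_nonneg.2 (sub_pos.2 hQ).le)
  have hgap : (r - Q) * (b - 1) = 1 := by
    rw [hb, add_sub_cancel_left, mul_inv_cancel₀ (sub_pos.2 hQ).ne']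
  have hwindow : P.real (Icc 1 b) ≤ Q := measureReal_mono fun _ hp => hp.1
  have hopt : optWelfare (dirac 1) (dirac b) = b := by
    rw [optWelfare_dirac_dirac, max_eq_right hb₁]
  refine ⟨isValueDistribution_dirac zero_le_one, isValueDistribution_dirac (by linarith),
    by rw [hopt]; linarith, ?_⟩
  rw [integral_welfare_dirac_dirac, hopt]
  nlinarith [mul_le_mul_of_nonneg_right hwindow (sub_nonneg.2 hb₁)]

lemma isHardInstance_twoPoint_dirac {ε : ℝ} (hε₀ : 0 < ε) (hε : 4 * ε ≤ 3 * r - 2)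
    (hQ : r ≤ P.real (Ici 1)) :
    IsHardInstance P r (twoPoint ε 0 ε⁻¹) (dirac (1 - ε)) := by
  have hr₁ : r ≤ 1 := hQ.trans measureReal_le_one
  have hεinv : ε * ε⁻¹ = 1 := mul_inv_cancel₀ hε₀.ne'
  have hεinv₄ : 4 ≤ ε⁻¹ := by
    rw [le_inv_comm₀ (by norm_num) hε₀]; linarith
  have hwindow : P.real (Icc 0 (1 - ε)) ≤ 1 - r :=
    calc P.real (Icc 0 (1 - ε)) ≤ P.real (Ici 1)ᶜ :=
          measureReal_mono fun _ hp hp' => by linarith [hp.2, mem_Ici.1 hp']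
      _ = 1 - P.real (Ici 1) := probReal_compl_eq_one_sub measurableSet_Ici
      _ ≤ 1 - r := by linarith
  have hopt : optWelfare (twoPoint ε 0 ε⁻¹) (dirac (1 - ε)) = (1 - ε) ^ 2 + 1 := by
    rw [optWelfare_twoPoint_dirac hε₀.le (by linarith), max_eq_right (by linarith),
      max_eq_left (by linarith), hεinv]
    ring
  refine ⟨isValueDistribution_twoPoint hε₀.le (by linarith) le_rfl (by linarith),
    isValueDistribution_dirac (by linarith), by rw [hopt]; positivity, ?_⟩
  rw [integral_welfare_twoPoint_dirac P hε₀.le (by linarith),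
    Icc_eq_empty_of_lt (show 1 - ε < ε⁻¹ by linarith), measureReal_empty, hopt]
  calc _ = (1 - ε) ^ 2 * P.real (Icc 0 (1 - ε)) + 1 := by linear_combination hεinv
    _ < r * ((1 - ε) ^ 2 + 1) := by
      nlinarith [mul_le_mul_of_nonneg_left hwindow (sq_nonneg (1 - ε)), mul_pos hε₀ hε₀]

lemma isHardInstance_dirac_zero_dirac_one (hQ : P.real (Icc 0 1) < r) :
    IsHardInstance P r (dirac 0) (dirac 1) := by
  have hopt : optWelfare (dirac 0) (dirac 1) = 1 := by
    rw [optWelfare_dirac_dirac, max_eq_right zero_le_one]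
  refine ⟨isValueDistribution_dirac le_rfl, isValueDistribution_dirac zero_le_one,
    by rw [hopt]; exact one_pos, ?_⟩
  rw [integral_welfare_dirac_dirac, hopt]
  linarith

lemma isHardInstance_dirac_twoPoint {ε : ℝ} (hε₀ : 0 < ε) (hε : 4 * ε ≤ 3 * r - 2)
    (hQ : r ≤ P.real (Icc 0 1)) :
    IsHardInstance P r (dirac (1 + ε)) (twoPoint ε 0 ε⁻¹) := by
  have hr₁ : r ≤ 1 := hQ.trans measureReal_le_one
  have hεinv : ε * ε⁻¹ = 1 := mul_inv_cancel₀ hε₀.ne'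
  have hεinv₄ : 4 ≤ ε⁻¹ := by
    rw [le_inv_comm₀ (by norm_num) hε₀]; linarith
  have hwindow : P.real (Icc (1 + ε) ε⁻¹) ≤ 1 - r :=
    calc P.real (Icc (1 + ε) ε⁻¹) ≤ P.real (Icc 0 1)ᶜ :=
          measureReal_mono fun p hp hp' => by linarith [hp.1, hp'.2]
      _ = 1 - P.real (Icc 0 1) := probReal_compl_eq_one_sub measurableSet_Icc
      _ ≤ 1 - r := by linarith
  have hopt : optWelfare (dirac (1 + ε)) (twoPoint ε 0 ε⁻¹) = 2 - ε ^ 2 := by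
    rw [optWelfare_dirac_twoPoint hε₀.le (by linarith), max_eq_left (by linarith),
      max_eq_right (by linarith), hεinv]
    ring
  refine ⟨isValueDistribution_dirac (by linarith),
    isValueDistribution_twoPoint hε₀.le (by linarith) le_rfl (by linarith),
    by rw [hopt]; nlinarith, ?_⟩
  rw [integral_welfare_dirac_twoPoint P hε₀.le (by linarith),
    Icc_eq_empty_of_lt (show 0 < 1 + ε by linarith), measureReal_empty, hopt]
  have hgain : 0 ≤ 1 - ε * (1 + ε) := by nlinarith
  calc _ = 1 + ε + P.real (Icc (1 + ε) ε⁻¹) * (1 - ε * (1 + ε)) := by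
        linear_combination P.real (Icc (1 + ε) ε⁻¹) * hεinv
    _ < r * (2 - ε ^ 2) := by
      nlinarith [mul_le_mul_of_nonneg_right hwindow hgain, mul_pos hε₀ hε₀]

end HardInstances

section ExistsHardInstance

variable (P : Measure ℝ) [IsProbabilityMeasure P] {r : ℝ}

lemma exists_isHardInstance_integral_left_eq_one (hr : 2 / 3 < r) :
    ∃ μ ν, IsHardInstance P r μ ν ∧ ∫ s, s ∂μ = 1 := by
  have hε₀ : 0 < (3 * r - 2) / 4 := by linarith
  by_cases hQ : P.real (Ici 1) < r
  · exact ⟨_, _, isHardInstance_dirac_one_dirac P hQ, by simp⟩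
  · have hr₁ : r ≤ 1 := (not_lt.1 hQ).trans measureReal_le_one
    exact ⟨_, _, isHardInstance_twoPoint_dirac P hε₀ (by linarith) (not_lt.1 hQ),
      integral_id_twoPoint_zero_inv hε₀ (by linarith)⟩

lemma exists_isHardInstance_integral_right_eq_one (hr : 2 / 3 < r) :
    ∃ μ ν, IsHardInstance P r μ ν ∧ ∫ b, b ∂ν = 1 := by
  have hε₀ : 0 < (3 * r - 2) / 4 := by linarith
  by_cases hQ : P.real (Icc 0 1) < r
  · exact ⟨_, _, isHardInstance_dirac_zero_dirac_one P hQ, by simp⟩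
  · have hr₁ : r ≤ 1 := (not_lt.1 hQ).trans measureReal_le_one
    exact ⟨_, _, isHardInstance_dirac_twoPoint P hε₀ (by linarith) (not_lt.1 hQ),
      integral_id_twoPoint_zero_inv hε₀ (by linarith)⟩

end ExistsHardInstance

theorem stmt_9_general (P : Measure ℝ) [IsProbabilityMeasure P]
    (r : ℝ) (hr : 2 / 3 < r) :
    (∃ μ ν : Measure ℝ, IsProbabilityMeasure μ ∧ IsProbabilityMeasure ν ∧
      μ (Set.Iio 0) = 0 ∧ ν (Set.Iio 0) = 0 ∧
      Integrable id μ ∧ Integrable id ν ∧ (∫ s, s ∂μ) = 1 ∧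
      Integrable (fun z : ℝ × ℝ => max z.1 z.2) (μ.prod ν) ∧
      0 < optWelfare μ ν ∧
      (∫ p, welfare μ ν p ∂P) < r * optWelfare μ ν) ∧
    (∃ μ' ν' : Measure ℝ, IsProbabilityMeasure μ' ∧ IsProbabilityMeasure ν' ∧
      μ' (Set.Iio 0) = 0 ∧ ν' (Set.Iio 0) = 0 ∧
      Integrable id μ' ∧ Integrable id ν' ∧ (∫ b, b ∂ν') = 1 ∧
      Integrable (fun z : ℝ × ℝ => max z.1 z.2) (μ'.prod ν') ∧
      0 < optWelfare μ' ν' ∧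
      (∫ p, welfare μ' ν' p ∂P) < r * optWelfare μ' ν') := by
  obtain ⟨μ, ν, h, hmean⟩ := exists_isHardInstance_integral_left_eq_one P hr
  obtain ⟨μ', ν', h', hmean'⟩ := exists_isHardInstance_integral_right_eq_one P hr
  exact ⟨⟨μ, ν, h.left.isProbabilityMeasure, h.right.isProbabilityMeasure, h.left.Iio_zero,
      h.right.Iio_zero, h.left.integrable_id, h.right.integrable_id, hmean, h.integrable_max,
      h.optWelfare_pos, h.integral_welfare_lt⟩,
    ⟨μ', ν', h'.left.isProbabilityMeasure, h'.right.isProbabilityMeasure, h'.left.Iio_zero,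
      h'.right.Iio_zero, h'.left.integrable_id, h'.right.integrable_id, hmean', h'.integrable_max,
      h'.optWelfare_pos, h'.integral_welfare_lt⟩⟩

/-- No fixed-price mechanism using only the mean of one side can guarantee more
than `2/3` of the optimal welfare: for every price distribution `P` on `[0,∞)` and
every `r > 2/3`, there is an instance with seller mean `1` (resp. buyer mean `1`)
on which `P` obtains less than `r` of the optimal welfare. -/
theorem stmt_9 (P : Measure ℝ) [IsProbabilityMeasure P] (hP : P (Set.Iio 0) = 0)
    (r : ℝ) (hr : 2 / 3 < r) :
    (∃ μ ν : Measure ℝ, IsProbabilityMeasure μ ∧ IsProbabilityMeasure ν ∧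
      μ (Set.Iio 0) = 0 ∧ ν (Set.Iio 0) = 0 ∧
      Integrable id μ ∧ Integrable id ν ∧ (∫ s, s ∂μ) = 1 ∧
      Integrable (fun z : ℝ × ℝ => max z.1 z.2) (μ.prod ν) ∧
      0 < optWelfare μ ν ∧
      (∫ p, welfare μ ν p ∂P) < r * optWelfare μ ν) ∧
    (∃ μ' ν' : Measure ℝ, IsProbabilityMeasure μ' ∧ IsProbabilityMeasure ν' ∧
      μ' (Set.Iio 0) = 0 ∧ ν' (Set.Iio 0) = 0 ∧
      Integrable id μ' ∧ Integrable id ν' ∧ (∫ b, b ∂ν') = 1 ∧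
      Integrable (fun z : ℝ × ℝ => max z.1 z.2) (μ'.prod ν') ∧
      0 < optWelfare μ' ν' ∧
      (∫ p, welfare μ' ν' p ∂P) < r * optWelfare μ' ν') :=
  stmt_9_general P r hr
end

section
/- Let Q be a Borel probability measure on [0,1] and set r = inf_{x ∈ [0,1]} [ ∫_{[0,x]} t dQ(t) + 1 − x ]. Then r is tight for the quantile mechanism over the seller's distribution: for every ε > 0 there exists an instance I = (F_S, F_B) of bilateral trade with 0 < OPT(I) < ∞ such that ∫ W(I, F_S^{-1}(t)) dQ(t) ≤ (r + ε) · OPT(I). -/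
/-!
The hard instance: the seller has mass `x` spread uniformly over `(0, δ]` and mass `1 - x` at `1`,
the buyer's value is `1 - δ`, so `OPT = 1 - x δ`. For `t ≤ x` the `t`-quantile of the seller is
`δ t / x`, at which the seller accepts with probability exactly `t` and the gain from trade is at
most `1`; for `t > x` it is `1`, above the buyer's value, and nothing trades. Hence the mechanism
earns at most `E[S] + ∫_{[0,x]} t dQ = x δ / 2 + 1 - x + ∫_{[0,x]} t dQ`, and taking `x` nearly
optimal in the definition of `r` and `δ` small gives the ratio `r + ε`.
-/

open MeasureTheory

/-- The quantile function of a measure `F` on `ℝ`: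
`F⁻¹(x) = inf { y | F((−∞,y]) ≥ x }`. -/
noncomputable def quantileFn (F : Measure ℝ) (x : ℝ) : ℝ :=
  sInf { y : ℝ | x ≤ (F (Set.Iic y)).toReal }

/-- The quantity `r = inf_{x ∈ [0,1]} [∫_{[0,x]} t dQ(t) + 1 − x]`. -/
noncomputable def sellerQuantRatio (Q : Measure ℝ) : ℝ :=
  sInf { v : ℝ | ∃ x : ℝ, 0 ≤ x ∧ x ≤ 1 ∧
    v = (∫ t in Set.Icc (0:ℝ) x, t ∂Q) + 1 - x }

open Set

section Quantile

variable {F : Measure ℝ} {t : ℝ}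

lemma quantileFn_of_nonpos (ht : t ≤ 0) : quantileFn F t = 0 := by
  have hset : {y : ℝ | t ≤ (F (Iic y)).toReal} = univ :=
    eq_univ_of_forall fun _ => ht.trans ENNReal.toReal_nonneg
  rw [quantileFn, hset, csInf_of_not_bddBelow not_bddBelow_univ, Real.sInf_empty]

lemma quantileFn_of_measure_univ_lt [IsFiniteMeasure F] (ht : (F univ).toReal < t) :
    quantileFn F t = 0 := by
  have hset : {y : ℝ | t ≤ (F (Iic y)).toReal} = ∅ :=
    eq_empty_of_forall_notMem fun y hy =>
      ht.not_ge (hy.trans (ENNReal.toReal_mono (measure_ne_top F _) (measure_mono (subset_univ _))))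
  rw [quantileFn, hset, Real.sInf_empty]

lemma quantileFn_le [IsFiniteMeasure F] {a y : ℝ} (ha : (F (Iic a)).toReal < t)
    (hy : t ≤ (F (Iic y)).toReal) : quantileFn F t ≤ y := by
  refine csInf_le ⟨a, fun z hz => ?_⟩ hy
  by_contra! hza
  exact ha.not_ge (hz.trans (ENNReal.toReal_mono (measure_ne_top F _)
    (measure_mono (Iic_subset_Iic.2 hza.le))))

lemma le_quantileFn {a y : ℝ} (hy : t ≤ (F (Iic y)).toReal)
    (ha : ∀ z < a, (F (Iic z)).toReal < t) : a ≤ quantileFn F t :=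
  le_csInf ⟨y, hy⟩ fun z hz => not_lt.1 fun hza => (ha z hza).not_ge hz

end Quantile

section DiracBuyer

variable {μ : Measure ℝ} {b p : ℝ}

lemma welfare_dirac [SFinite μ] :
    welfare μ (Measure.dirac b) p = ∫ s, (s + if s ≤ p ∧ p ≤ b then b - s else 0) ∂μ := by
  rw [welfare, Measure.prod_dirac, integral_map measurable_prodMk_right.aemeasurable]
  refine (measurable_fst.add (Measurable.ite ?_ (measurable_snd.sub measurable_fst)
    measurable_const)).aestronglyMeasurable
  exact (measurableSet_le measurable_fst measurable_const).inter
    (measurableSet_le measurable_const measurable_snd)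

lemma optWelfare_dirac [SFinite μ] :
    optWelfare μ (Measure.dirac b) = ∫ s, max s b ∂μ := by
  rw [optWelfare, Measure.prod_dirac, integral_map measurable_prodMk_right.aemeasurable
    (measurable_fst.max measurable_snd).aestronglyMeasurable]

lemma integrable_max_prod_dirac [SFinite μ] (h : Integrable (fun s => max s b) μ) :
    Integrable (fun z : ℝ × ℝ => max z.1 z.2) (μ.prod (Measure.dirac b)) := by
  rw [Measure.prod_dirac]
  exact (integrable_map_measure (measurable_fst.max measurable_snd).aestronglyMeasurable
    measurable_prodMk_right.aemeasurable).2 h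

lemma trade_integrand_nonneg {s : ℝ} (hs : 0 ≤ s) :
    0 ≤ s + if s ≤ p ∧ p ≤ b then b - s else 0 := by
  split_ifs with h
  · linarith [h.1, h.2]
  · simpa using hs

lemma welfare_dirac_nonneg [SFinite μ] (hμ : μ (Iio 0) = 0) :
    0 ≤ welfare μ (Measure.dirac b) p := by
  rw [welfare_dirac]
  refine integral_nonneg_of_ae ?_
  filter_upwards [measure_eq_zero_iff_ae_notMem.1 hμ] with s hs
  exact trade_integrand_nonneg (not_lt.1 hs)

lemma welfare_dirac_of_lt [SFinite μ] (h : b < p) :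
    welfare μ (Measure.dirac b) p = ∫ s, s ∂μ := by
  rw [welfare_dirac]
  simp [h.not_ge]

lemma welfare_dirac_le [IsFiniteMeasure μ] (hμ : μ (Iio 0) = 0) (hint : Integrable (fun s => s) μ)
    (hb : b ≤ 1) : welfare μ (Measure.dirac b) p ≤ ∫ s, s ∂μ + (μ (Iic p)).toReal := by
  have hbound : ∀ᵐ s ∂μ,
      (s + if s ≤ p ∧ p ≤ b then b - s else 0) ≤ s + (Iic p).indicator (fun _ => 1) s := by
    filter_upwards [measure_eq_zero_iff_ae_notMem.1 hμ] with s hs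
    have hs : 0 ≤ s := not_lt.1 hs
    gcongr s + ?_
    by_cases h : s ≤ p ∧ p ≤ b
    · rw [if_pos h, indicator_of_mem (mem_Iic.2 h.1)]; linarith
    · rw [if_neg h]; exact indicator_nonneg (fun _ _ => zero_le_one) s
  have hind : Integrable ((Iic p).indicator fun _ => (1 : ℝ)) μ :=
    (integrable_const 1).indicator measurableSet_Iic
  rw [welfare_dirac]
  refine (integral_mono_of_nonneg (g := fun s => s + (Iic p).indicator (fun _ => 1) s) ?_
    (hint.add hind) hbound).trans_eq ?_
  · filter_upwards [measure_eq_zero_iff_ae_notMem.1 hμ] with s hs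
    exact trade_integrand_nonneg (not_lt.1 hs)
  · rw [integral_add hint hind, integral_indicator_const _ measurableSet_Iic, smul_eq_mul,
      mul_one]
    rfl

end DiracBuyer

noncomputable def hardSeller (x δ : ℝ) : Measure ℝ :=
  ENNReal.ofReal (x / δ) • volume.restrict (Ioc 0 δ) + ENNReal.ofReal (1 - x) • Measure.dirac 1

namespace hardSeller

variable {x δ t : ℝ}

lemma isProbabilityMeasure (hx0 : 0 ≤ x) (hx1 : x ≤ 1) (hδ : 0 < δ) :
    IsProbabilityMeasure (hardSeller x δ) := by
  constructor
  simp only [hardSeller, Measure.add_apply, Measure.smul_apply, smul_eq_mul,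
    Measure.restrict_apply MeasurableSet.univ, univ_inter, Real.volume_Ioc, sub_zero,
    measure_univ, mul_one]
  rw [← ENNReal.ofReal_mul (by positivity), div_mul_cancel₀ _ hδ.ne',
    ← ENNReal.ofReal_add hx0 (by linarith), add_sub_cancel, ENNReal.ofReal_one]

lemma measure_Iio_zero : hardSeller x δ (Iio 0) = 0 := by
  have h : Iio (0:ℝ) ∩ Ioc 0 δ = ∅ :=
    eq_empty_of_forall_notMem fun s hs => (lt_irrefl 0) (hs.2.1.trans hs.1)
  simp [hardSeller, Measure.restrict_apply measurableSet_Iio, h]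

lemma measure_Iic_of_le (hx0 : 0 ≤ x) (hδ1 : δ < 1) {y : ℝ} (hy0 : 0 ≤ y) (hyδ : y ≤ δ) :
    (hardSeller x δ (Iic y)).toReal = x / δ * y := by
  have h : Iic y ∩ Ioc 0 δ = Ioc 0 y := by
    rw [inter_comm, Ioc_inter_Iic, min_eq_right hyδ]
  have hy1 : ¬ (1:ℝ) ≤ y := by linarith
  simp only [hardSeller, Measure.add_apply, Measure.smul_apply, smul_eq_mul,
    Measure.restrict_apply measurableSet_Iic, h, Real.volume_Ioc, sub_zero,
    Measure.dirac_apply' _ measurableSet_Iic, indicator_of_notMem (mem_Iic.not.2 hy1),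
    mul_zero, add_zero]
  rw [ENNReal.toReal_mul, ENNReal.toReal_ofReal (div_nonneg hx0 (hy0.trans hyδ)),
    ENNReal.toReal_ofReal hy0]

lemma measure_Iic_le (hx0 : 0 ≤ x) (hδ : 0 < δ) {y : ℝ} (hy : y < 1) :
    (hardSeller x δ (Iic y)).toReal ≤ x := by
  refine ENNReal.toReal_le_of_le_ofReal hx0 ?_
  have hy1 : ¬ (1:ℝ) ≤ y := hy.not_ge
  simp only [hardSeller, Measure.add_apply, Measure.smul_apply, smul_eq_mul,
    Measure.restrict_apply measurableSet_Iic, Measure.dirac_apply' _ measurableSet_Iic,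
    indicator_of_notMem (mem_Iic.not.2 hy1), mul_zero, add_zero]
  calc ENNReal.ofReal (x / δ) * volume (Iic y ∩ Ioc 0 δ)
      ≤ ENNReal.ofReal (x / δ) * ENNReal.ofReal δ := by
        gcongr
        exact (measure_mono inter_subset_right).trans_eq (by simp)
    _ = ENNReal.ofReal x := by
        rw [← ENNReal.ofReal_mul (by positivity), div_mul_cancel₀ _ hδ.ne']

lemma measure_Iic_one (hx0 : 0 ≤ x) (hx1 : x ≤ 1) (hδ : 0 < δ) (hδ1 : δ ≤ 1) :
    hardSeller x δ (Iic 1) = 1 := by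
  have := isProbabilityMeasure hx0 hx1 hδ
  refine (prob_compl_eq_zero_iff measurableSet_Iic).1 ?_
  have h : Ioi (1:ℝ) ∩ Ioc 0 δ = ∅ :=
    eq_empty_of_forall_notMem fun s hs => (lt_irrefl 1) (hs.1.trans_le (hs.2.2.trans hδ1))
  simp [hardSeller, Measure.restrict_apply measurableSet_Ioi, h]

lemma integrable {f : ℝ → ℝ} (hf : Continuous f) : Integrable f (hardSeller x δ) :=
  ((hf.integrableOn_Ioc).smul_measure ENNReal.ofReal_ne_top).add_measure
    ((integrable_dirac (by simp)).smul_measure ENNReal.ofReal_ne_top)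

lemma integral_eq (hx0 : 0 ≤ x) (hx1 : x ≤ 1) (hδ : 0 ≤ δ) {f : ℝ → ℝ} (hf : Continuous f) :
    ∫ s, f s ∂hardSeller x δ = x / δ * (∫ s in (0)..δ, f s) + (1 - x) * f 1 := by
  rw [hardSeller, integral_add_measure (hf.integrableOn_Ioc.smul_measure ENNReal.ofReal_ne_top)
      ((integrable_dirac (by simp)).smul_measure ENNReal.ofReal_ne_top),
    integral_smul_measure, integral_smul_measure, integral_dirac,
    ENNReal.toReal_ofReal (by positivity), ENNReal.toReal_ofReal (by linarith),
    intervalIntegral.integral_of_le hδ, smul_eq_mul, smul_eq_mul]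

lemma measure_Iic_quantileFn_le (hx0 : 0 ≤ x) (hx1 : x ≤ 1) (hδ : 0 < δ) (hδ1 : δ < 1)
    (ht0 : 0 ≤ t) (htx : t ≤ x) :
    (hardSeller x δ (Iic (quantileFn (hardSeller x δ) t))).toReal ≤ t := by
  have := isProbabilityMeasure hx0 hx1 hδ
  rcases ht0.eq_or_lt with rfl | ht0
  · rw [quantileFn_of_nonpos le_rfl, measure_Iic_of_le hx0 hδ1 le_rfl hδ.le, mul_zero]
  have hx : 0 < x := ht0.trans_le htx
  have hy0 : 0 ≤ δ * t / x := by positivity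
  have hyδ : δ * t / x ≤ δ := div_le_of_le_mul₀ hx.le hδ.le (by nlinarith)
  have hcdf : (hardSeller x δ (Iic (δ * t / x))).toReal = t := by
    rw [measure_Iic_of_le hx0 hδ1 hy0 hyδ]
    field_simp
  have hq : quantileFn (hardSeller x δ) t ≤ δ * t / x := by
    refine quantileFn_le (a := 0) ?_ hcdf.ge
    rwa [measure_Iic_of_le hx0 hδ1 le_rfl hδ.le, mul_zero]
  exact (ENNReal.toReal_mono (measure_ne_top _ _) (measure_mono (Iic_subset_Iic.2 hq))).trans_eq
    hcdf

lemma one_le_quantileFn (hx0 : 0 ≤ x) (hx1 : x ≤ 1) (hδ : 0 < δ) (hδ1 : δ ≤ 1)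
    (hxt : x < t) (ht1 : t ≤ 1) : 1 ≤ quantileFn (hardSeller x δ) t :=
  le_quantileFn (y := 1) (by simpa [measure_Iic_one hx0 hx1 hδ hδ1] using ht1)
    fun _ hz => (measure_Iic_le hx0 hδ hz).trans_lt hxt

lemma integral_id (hx0 : 0 ≤ x) (hx1 : x ≤ 1) (hδ : 0 < δ) :
    ∫ s, s ∂hardSeller x δ = x * δ / 2 + (1 - x) := by
  rw [integral_eq (f := fun s => s) hx0 hx1 hδ.le continuous_id, _root_.integral_id]
  field_simp
  ring

lemma optWelfare_dirac (hx0 : 0 ≤ x) (hx1 : x ≤ 1) (hδ : 0 < δ) (hδ2 : δ ≤ 1 / 2) :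
    optWelfare (hardSeller x δ) (Measure.dirac (1 - δ)) = 1 - x * δ := by
  have hmax : ∫ s in (0)..δ, max s (1 - δ) = δ * (1 - δ) := by
    rw [intervalIntegral.integral_congr (g := fun _ => 1 - δ) fun s hs => by
      rw [uIcc_of_le hδ.le] at hs
      exact max_eq_right (by linarith [hs.2])]
    simp only [intervalIntegral.integral_const, sub_zero, smul_eq_mul]
  have := isProbabilityMeasure hx0 hx1 hδ
  rw [_root_.optWelfare_dirac, integral_eq (f := fun s => max s (1 - δ)) hx0 hx1 hδ.le
      (continuous_id.max continuous_const), hmax, max_eq_left (by linarith)]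
  field_simp
  ring

lemma welfare_quantileFn_le (hx0 : 0 ≤ x) (hx1 : x ≤ 1) (hδ : 0 < δ) (hδ1 : δ < 1) (t : ℝ) :
    welfare (hardSeller x δ) (Measure.dirac (1 - δ)) (quantileFn (hardSeller x δ) t) ≤
      x * δ / 2 + (1 - x) + (Icc 0 x).indicator (fun t => t) t := by
  have := isProbabilityMeasure hx0 hx1 hδ
  have hle : ∀ p, welfare (hardSeller x δ) (Measure.dirac (1 - δ)) p ≤
      x * δ / 2 + (1 - x) + (hardSeller x δ (Iic p)).toReal := fun p => by
    rw [← integral_id hx0 hx1 hδ]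
    exact welfare_dirac_le measure_Iio_zero (integrable continuous_id) (by linarith)
  by_cases ht : t ∈ Icc 0 x
  · rw [indicator_of_mem ht]
    exact (hle _).trans (by gcongr; exact measure_Iic_quantileFn_le hx0 hx1 hδ hδ1 ht.1 ht.2)
  rw [indicator_of_notMem ht, add_zero]
  -- off `[0, x]` the posted price is either the junk value `0` (for `t ≤ 0` or `1 < t`)
  -- or at least `1`, above the buyer's value
  by_cases hq : quantileFn (hardSeller x δ) t = 0
  · simpa [hq, measure_Iic_of_le hx0 hδ1 le_rfl hδ.le] using hle 0
  have ht0 : 0 < t := not_le.1 fun h => hq (quantileFn_of_nonpos h)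
  have ht1 : t ≤ 1 := not_lt.1 fun h => hq (quantileFn_of_measure_univ_lt (by simpa using h))
  have hxt : x < t := not_le.1 fun h => ht ⟨ht0.le, h⟩
  rw [welfare_dirac_of_lt ((by linarith : 1 - δ < 1).trans_le
    (one_le_quantileFn hx0 hx1 hδ hδ1.le hxt ht1)), integral_id hx0 hx1 hδ]

end hardSeller

section SellerQuantRatio

variable (Q : Measure ℝ)

lemma zero_mem_lowerBounds_sellerQuantRatio_set :
    0 ∈ lowerBounds
      {v : ℝ | ∃ x : ℝ, 0 ≤ x ∧ x ≤ 1 ∧ v = (∫ t in Icc (0:ℝ) x, t ∂Q) + 1 - x} := by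
  rintro v ⟨x, -, hx1, rfl⟩
  linarith [setIntegral_nonneg (μ := Q) measurableSet_Icc fun t (ht : t ∈ Icc 0 x) => ht.1]

lemma one_mem_sellerQuantRatio_set :
    1 ∈ {v : ℝ | ∃ x : ℝ, 0 ≤ x ∧ x ≤ 1 ∧ v = (∫ t in Icc (0:ℝ) x, t ∂Q) + 1 - x} := by
  refine ⟨0, le_rfl, zero_le_one, ?_⟩
  rw [setIntegral_congr_fun measurableSet_Icc (g := fun _ => 0) fun t ht => ?_]
  · simp
  · exact le_antisymm ht.2 ht.1

lemma sellerQuantRatio_le_one : sellerQuantRatio Q ≤ 1 :=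
  csInf_le ⟨0, zero_mem_lowerBounds_sellerQuantRatio_set Q⟩ (one_mem_sellerQuantRatio_set Q)

lemma exists_lt_sellerQuantRatio_add {η : ℝ} (hη : 0 < η) :
    ∃ x, 0 ≤ x ∧ x ≤ 1 ∧ (∫ t in Icc (0:ℝ) x, t ∂Q) + 1 - x < sellerQuantRatio Q + η := by
  obtain ⟨_, ⟨x, hx0, hx1, rfl⟩, hlt⟩ :=
    (csInf_lt_iff ⟨0, zero_mem_lowerBounds_sellerQuantRatio_set Q⟩
      ⟨1, one_mem_sellerQuantRatio_set Q⟩).1 (lt_add_of_pos_right (sellerQuantRatio Q) hη)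
  exact ⟨x, hx0, hx1, hlt⟩

end SellerQuantRatio

theorem stmt_12_general (Q : Measure ℝ) [IsProbabilityMeasure Q]
    (ε : ℝ) (hε : 0 < ε) :
    ∃ μ ν : Measure ℝ, IsProbabilityMeasure μ ∧ IsProbabilityMeasure ν ∧
      μ (Set.Iio 0) = 0 ∧ ν (Set.Iio 0) = 0 ∧
      Integrable (fun z : ℝ × ℝ => max z.1 z.2) (μ.prod ν) ∧
      0 < optWelfare μ ν ∧
      (∫ t, welfare μ ν (quantileFn μ t) ∂Q) ≤ (sellerQuantRatio Q + ε) * optWelfare μ ν := by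
  obtain ⟨x, hx0, hx1, hx⟩ := exists_lt_sellerQuantRatio_add Q (half_pos hε)
  -- `δ (3 + 2ε) = ε` balances the loss `δ / 2 + ε / 2` against `(r + ε) x δ ≤ (1 + ε) δ`
  set δ := ε / (3 + 2 * ε)
  have hδ : 0 < δ := by positivity
  have hδ2 : δ ≤ 1 / 2 := by rw [div_le_iff₀ (by positivity)]; linarith
  have hδε : δ * (3 + 2 * ε) = ε := div_mul_cancel₀ _ (by positivity)
  have hxδ : x * δ ≤ δ := mul_le_of_le_one_left hδ.le hx1
  have hμ := hardSeller.isProbabilityMeasure hx0 hx1 hδ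
  have hopt := hardSeller.optWelfare_dirac hx0 hx1 hδ hδ2
  refine ⟨hardSeller x δ, Measure.dirac (1 - δ), hμ, inferInstance,
    hardSeller.measure_Iio_zero, by simp; linarith,
    integrable_max_prod_dirac (hardSeller.integrable (continuous_id.max continuous_const)),
    by rw [hopt]; linarith, ?_⟩
  have hind : Integrable ((Icc 0 x).indicator fun t => t) Q :=
    (continuous_id.integrableOn_Icc (μ := Q)).integrable_indicator measurableSet_Icc
  have hmech : ∫ t, welfare (hardSeller x δ) (Measure.dirac (1 - δ))
      (quantileFn (hardSeller x δ) t) ∂Q ≤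
      ∫ t, (x * δ / 2 + (1 - x) + (Icc 0 x).indicator (fun t => t) t) ∂Q :=
    integral_mono_of_nonneg (ae_of_all _ fun _ => welfare_dirac_nonneg hardSeller.measure_Iio_zero)
      ((integrable_const _).add hind)
      (ae_of_all _ (hardSeller.welfare_quantileFn_le hx0 hx1 hδ (by linarith)))
  rw [integral_add (integrable_const _) hind, integral_const, probReal_univ, one_smul,
    integral_indicator measurableSet_Icc] at hmech
  have hloss : (sellerQuantRatio Q + ε) * (x * δ) ≤ (1 + ε) * δ := by
    gcongr
    exact sellerQuantRatio_le_one Q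
  rw [hopt]
  linarith

/-- The bound `sellerQuantRatio Q` is tight for the quantile mechanism over the seller's
distribution: for every `ε > 0` there is an instance on which the mechanism posting
`F_S⁻¹(t)`, `t ~ Q`, gets at most `(r + ε) · OPT`. -/
theorem stmt_12 (Q : Measure ℝ) [IsProbabilityMeasure Q]
    (hQ : Q (Set.Icc (0:ℝ) 1)ᶜ = 0) (ε : ℝ) (hε : 0 < ε) :
    ∃ μ ν : Measure ℝ, IsProbabilityMeasure μ ∧ IsProbabilityMeasure ν ∧
      μ (Set.Iio 0) = 0 ∧ ν (Set.Iio 0) = 0 ∧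
      Integrable (fun z : ℝ × ℝ => max z.1 z.2) (μ.prod ν) ∧
      0 < optWelfare μ ν ∧
      (∫ t, welfare μ ν (quantileFn μ t) ∂Q) ≤ (sellerQuantRatio Q + ε) * optWelfare μ ν :=
  stmt_12_general Q ε hε
end

section
/- Let q : [0,1] → [0,∞) be continuous with ∫₀¹ q(t) dt = 1, let M = max_{x ∈ [0,1]} q(x), and let ω(h) = sup{ |q(x) − q(y)| : x, y ∈ [0,1], |x − y| ≤ h } be its modulus of continuity. Let ε ∈ (0, 1/3) and let n ≥ 2 be an integer satisfying: ω(1/√(n−1)) ≤ ε/100; 2n·exp( −ε² / (8·ω(1/√(n−1))²) ) ≤ ε (with the convention that this holds when ω(1/√(n−1)) = 0); and exp( −ε²·n / (48·M²) ) ≤ ε/2. Then there exist nonnegative reals P₁, …, Pₙ with Σᵢ Pᵢ = 1 such that sup_{x ∈ [0,1]} | Σ_{i=1}^{n} Pᵢ · fₙⁱ(x) − q(x) | ≤ ε, where fₙⁱ(x) = n·binom(n−1, i−1)·x^{i−1}·(1−x)^{n−i}. -/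
/-!
Take for `Pₖ` the mass of `q` on the `k`-th cell `[k/n, (k+1)/n]`: these weights are
nonnegative and sum to `∫₀¹ q = 1`. With `m = n - 1` one has `fₙᵏ = n · bₘₖ` for the Bernstein
basis `bₘₖ`, and `n Pₖ` is the mean of `q` over a cell lying within `1/n` of the node `k/m`.
Chaining along a segment gives `|q t - q x| ≤ (1 + √m |t - x|) ω(1/√m)`; AM–GM turns
`√m |k/m - x|` into `1/2 + m (k/m - x)² / 2`, and the Bernstein variance identity
`Σₖ (x - k/m)² bₘₖ(x) = x(1 - x)/m` bounds the error by `(5/2 + x(1 - x)/2) ω(1/√m) ≤ 3 ω(1/√m)`.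
-/

open MeasureTheory intervalIntegral

/-- The density of the `(i+1)`-th (1-indexed) order statistic of `n` i.i.d. uniform
samples on `[0,1]`: `fₙⁱ(x) = n·C(n−1, i)·xⁱ·(1−x)^(n−1−i)` (a scaled Bernstein
basis polynomial), for `i : Fin n`. -/
noncomputable def orderStatDensity (n : ℕ) (i : Fin n) (x : ℝ) : ℝ :=
  (n : ℝ) * (Nat.choose (n - 1) i : ℝ) * x ^ (i : ℕ) * (1 - x) ^ (n - 1 - (i : ℕ))

open Set unitInterval

section Modulus

variable {E F : Type*} [SeminormedAddCommGroup E] [NormedSpace ℝ E] [PseudoMetricSpace F]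

theorem Convex.dist_le_one_add_div_mul {s : Set E} (hs : Convex ℝ s) {f : E → F} {δ W : ℝ}
    (hδ : 0 < δ) (hf : ∀ a ∈ s, ∀ b ∈ s, dist a b ≤ δ → dist (f a) (f b) ≤ W)
    {x y : E} (hx : x ∈ s) (hy : y ∈ s) :
    dist (f x) (f y) ≤ (1 + dist x y / δ) * W := by
  have hW : 0 ≤ W := dist_nonneg.trans (hf x hx x hx (by simpa using hδ.le))
  set k : ℕ := ⌊dist x y / δ⌋₊ + 1 with hk_def
  have hk_cast : (k : ℝ) = ⌊dist x y / δ⌋₊ + 1 := by rw [hk_def]; push_cast; rfl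
  have hk : (0 : ℝ) < k := by positivity
  set z : ℕ → E := fun j => x + ((j : ℝ) / k) • (y - x)
  have hz_mem (j : ℕ) (hj : j ≤ k) : z j ∈ s :=
    hs.add_smul_sub_mem hx hy ⟨by positivity, div_le_one_of_le₀ (by exact_mod_cast hj) hk.le⟩
  have hz_step (j : ℕ) : dist (z j) (z (j + 1)) ≤ δ := by
    have hdiff : z (j + 1) - z j = (k : ℝ)⁻¹ • (y - x) := by
      simp only [z, add_sub_add_left_eq_sub, ← sub_smul]
      congr 1
      push_cast
      ring
    rw [dist_comm, dist_eq_norm, hdiff, norm_smul, norm_inv, Real.norm_natCast, ← dist_eq_norm',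
      inv_mul_le_iff₀ hk, ← div_le_iff₀ hδ, hk_cast]
    exact (Nat.lt_floor_add_one _).le
  calc dist (f x) (f y) = dist (f (z 0)) (f (z k)) := by simp [z, hk.ne']
    _ ≤ ∑ j ∈ Finset.range k, dist (f (z j)) (f (z (j + 1))) :=
        dist_le_range_sum_dist (fun j => f (z j)) k
    _ ≤ ∑ _j ∈ Finset.range k, W := Finset.sum_le_sum fun j hj =>
        hf _ (hz_mem j (Finset.mem_range.1 hj).le) _ (hz_mem (j + 1) (Finset.mem_range.1 hj))
          (hz_step j)
    _ = k * W := by simp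
    _ ≤ (1 + dist x y / δ) * W := by
        refine mul_le_mul_of_nonneg_right ?_ hW
        rw [hk_cast, add_comm]
        linarith [Nat.floor_le (show 0 ≤ dist x y / δ by positivity)]

end Modulus

theorem abs_sub_le_of_modulus {q ω : ℝ → ℝ} {s : Set ℝ} (hs : IsCompact s)
    (hqc : ContinuousOn q s)
    (hω : ∀ h : ℝ, ω h = sSup { d : ℝ | ∃ x ∈ s, ∃ y ∈ s, |x - y| ≤ h ∧ d = |q x - q y| })
    {h x y : ℝ} (hx : x ∈ s) (hy : y ∈ s) (hxy : |x - y| ≤ h) : |q x - q y| ≤ ω h := by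
  have hbdd : BddAbove ((fun p : ℝ × ℝ => |q p.1 - q p.2|) '' s ×ˢ s) :=
    (hs.prod hs).bddAbove_image <| by
      refine ((hqc.comp continuousOn_fst ?_).sub (hqc.comp continuousOn_snd ?_)).abs
      · exact fun p hp => hp.1
      · exact fun p hp => hp.2
  rw [hω]
  refine le_csSup (hbdd.mono ?_) ⟨x, hx, y, hy, hxy, rfl⟩
  rintro _ ⟨a, ha, b, hb, -, rfl⟩
  exact ⟨(a, b), ⟨ha, hb⟩, rfl⟩

theorem abs_inv_sub_mul_integral_sub_le {f : ℝ → ℝ} {a b y C : ℝ} (hab : a < b)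
    (hf : IntervalIntegrable f volume a b) (hC : ∀ t ∈ Icc a b, |f t - y| ≤ C) :
    |(b - a)⁻¹ * (∫ t in a..b, f t) - y| ≤ C := by
  have hba : 0 < b - a := sub_pos.2 hab
  have hint : |∫ t in a..b, (f t - y)| ≤ C * (b - a) := by
    have := norm_integral_le_of_norm_le_const (f := fun t => f t - y)
      fun t ht => hC t (Ioc_subset_Icc_self (by rwa [uIoc_of_le hab.le] at ht))
    rwa [Real.norm_eq_abs, abs_of_pos hba] at this
  rw [integral_sub hf intervalIntegrable_const, intervalIntegral.integral_const,
    smul_eq_mul] at hint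
  rw [show (b - a)⁻¹ * (∫ t in a..b, f t) - y = (b - a)⁻¹ * ((∫ t in a..b, f t) - (b - a) * y) by
    field_simp]
  rw [abs_mul, abs_inv, abs_of_pos hba, inv_mul_le_iff₀ hba, mul_comm (b - a) C]
  exact hint

theorem sum_integral_div_natCast {f : ℝ → ℝ} {n : ℕ} (hn : n ≠ 0)
    (hf : IntervalIntegrable f volume 0 1) :
    ∑ k : Fin n, ∫ t in (k : ℝ) / n..(k + 1) / n, f t = ∫ t in (0 : ℝ)..1, f t := by
  have hsub (k : ℕ) (hk : k < n) : uIcc ((k : ℝ) / n) ((k + 1 : ℕ) / n) ⊆ uIcc 0 1 := by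
    have : (k + 1 : ℝ) ≤ n := by exact_mod_cast hk
    refine uIcc_subset_uIcc (mem_uIcc_of_le (by positivity) ?_)
      (mem_uIcc_of_le (by positivity) ?_) <;>
      · push_cast
        rw [div_le_one (by positivity)]
        linarith
  have := sum_integral_adjacent_intervals (a := fun k : ℕ => (k : ℝ) / n) (f := f)
    fun k hk => hf.mono_set (hsub k hk)
  rw [Fin.sum_univ_eq_sum_range (fun k => ∫ t in (k : ℝ) / n..(k + 1) / n, f t)]
  simpa [hn] using this

theorem orderStatDensity_succ_eq_bernstein (m : ℕ) (i : Fin (m + 1)) (x : I) :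
    orderStatDensity (m + 1) i x = (m + 1) * bernstein m i x := by
  simp only [orderStatDensity, bernstein_apply, Nat.add_sub_cancel]
  push_cast
  ring

theorem abs_sum_mul_bernstein_sub_le {m : ℕ} (hm : m ≠ 0) (c : Fin (m + 1) → ℝ) (y A B : ℝ)
    (x : I) (hc : ∀ k, |c k - y| ≤ A + B * (m * (x - bernstein.z k : ℝ) ^ 2)) :
    |∑ k, c k * bernstein m k x - y| ≤ A + B * (x * (1 - x)) := by
  calc |∑ k, c k * bernstein m k x - y| = |∑ k, (c k - y) * bernstein m k x| := by
        simp only [sub_mul, Finset.sum_sub_distrib, ← Finset.mul_sum, bernstein.probability,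
          mul_one]
    _ ≤ ∑ k, |c k - y| * bernstein m k x := by
        refine (Finset.abs_sum_le_sum_abs _ _).trans_eq ?_
        simp only [abs_mul, abs_of_nonneg bernstein_nonneg]
    _ ≤ ∑ k, (A + B * (m * (x - bernstein.z k : ℝ) ^ 2)) * bernstein m k x :=
        Finset.sum_le_sum fun k _ => mul_le_mul_of_nonneg_right (hc k) bernstein_nonneg
    _ = A * ∑ k : Fin (m + 1), bernstein m k x
          + B * m * ∑ k : Fin (m + 1), (x - bernstein.z k : ℝ) ^ 2 * bernstein m k x := by
        simp only [add_mul, Finset.sum_add_distrib, Finset.mul_sum]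
        congr 1
        refine Finset.sum_congr rfl fun k _ => ?_
        ring
    _ = A + B * (x * (1 - x)) := by
        rw [bernstein.probability, bernstein.variance hm]
        field_simp

theorem Icc_div_succ_subset_Icc {m k : ℕ} (hk : k ≤ m) :
    Icc ((k : ℝ) / (m + 1)) ((k + 1) / (m + 1)) ⊆ Icc 0 1 :=
  Icc_subset_Icc (by positivity)
    ((div_le_one (by positivity)).2 (by exact_mod_cast Nat.succ_le_succ hk))

theorem abs_sub_div_le_of_mem_Icc {m k : ℕ} (hm : m ≠ 0) (hk : k ≤ m) {t : ℝ}
    (ht : t ∈ Icc ((k : ℝ) / (m + 1)) ((k + 1) / (m + 1))) : |t - k / m| ≤ 1 / (m + 1) := by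
  have hm' : (0 : ℝ) < m := by positivity
  have hkm : (k : ℝ) ≤ m := by exact_mod_cast hk
  have hlo : (k : ℝ) / (m + 1) ≤ k / m := by gcongr; linarith
  have hhi : (k : ℝ) / m ≤ (k + 1) / (m + 1) := by
    rw [div_le_div_iff₀ hm' (by positivity)]
    linarith
  rw [abs_le]
  constructor <;> linarith [ht.1, ht.2, show ((k : ℝ) + 1) / (m + 1) = k / (m + 1) + 1 / (m + 1)
    by ring]

theorem one_add_abs_sub_mul_sqrt_le {m k : ℕ} (hm : m ≠ 0) (hk : k ≤ m) {t : ℝ}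
    (ht : t ∈ Icc ((k : ℝ) / (m + 1)) ((k + 1) / (m + 1))) (x : ℝ) :
    1 + |t - x| * √m ≤ 5 / 2 + 1 / 2 * (m * (x - k / m) ^ 2) := by
  have hsqrt : √m ≤ m + 1 := by
    nlinarith [Real.sq_sqrt (Nat.cast_nonneg (α := ℝ) m), Real.sqrt_nonneg m]
  have hcell : |t - k / m| * √m ≤ 1 := by
    calc |t - k / m| * √m ≤ 1 / (m + 1) * (m + 1) := by
          gcongr
          exact abs_sub_div_le_of_mem_Icc hm hk ht
      _ = 1 := by field_simp
  -- AM-GM with the two numbers `1` and `√m |x - k/m|`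
  have hamgm : |x - k / m| * √m ≤ 1 / 2 + 1 / 2 * (m * (x - k / m) ^ 2) := by
    nlinarith [sq_nonneg (|x - k / m| * √m - 1), sq_abs (x - k / m),
      Real.sq_sqrt (Nat.cast_nonneg (α := ℝ) m)]
  have htri : |t - x| ≤ |t - k / m| + |x - k / m| :=
    (abs_sub_le _ _ _).trans_eq (by rw [abs_sub_comm (k / m : ℝ) x])
  nlinarith [Real.sqrt_nonneg m]

theorem abs_mul_integral_cell_sub_le {q : ℝ → ℝ} (hqc : ContinuousOn q (Icc 0 1)) {m k : ℕ}
    (hm : m ≠ 0) (hk : k ≤ m) {x W : ℝ} (hW : 0 ≤ W)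
    (hmod : ∀ t ∈ Icc (0 : ℝ) 1, |q t - q x| ≤ (1 + |t - x| * √m) * W) :
    |(m + 1) * (∫ t in (k : ℝ) / (m + 1)..(k + 1) / (m + 1), q t) - q x|
      ≤ 5 / 2 * W + W / 2 * (m * (x - k / m) ^ 2) := by
  have hcell := Icc_div_succ_subset_Icc hk
  have hlen : (((k : ℝ) + 1) / (m + 1) - k / (m + 1))⁻¹ = m + 1 := by field_simp; ring
  nth_rewrite 1 [← hlen]
  refine abs_inv_sub_mul_integral_sub_le (by gcongr; linarith)
    ((hqc.mono ?_).intervalIntegrable) fun t ht => (hmod t (hcell ht)).trans ?_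
  · rwa [uIcc_of_le (by gcongr; linarith)]
  · have := mul_le_mul_of_nonneg_right (one_add_abs_sub_mul_sqrt_le hm hk ht x) hW
    linarith

theorem stmt_18_general (q : ℝ → ℝ) (hqc : ContinuousOn q (Set.Icc 0 1))
    (hq0 : ∀ x ∈ Set.Icc (0:ℝ) 1, 0 ≤ q x)
    (hq1 : (∫ t in (0:ℝ)..1, q t) = 1)
    (ω : ℝ → ℝ)
    (hω : ∀ h : ℝ, ω h = sSup { d : ℝ | ∃ x ∈ Set.Icc (0:ℝ) 1, ∃ y ∈ Set.Icc (0:ℝ) 1,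
      |x - y| ≤ h ∧ d = |q x - q y| })
    (ε : ℝ)
    (n : ℕ) (hn : 2 ≤ n)
    (h1 : ω (1 / Real.sqrt ((n : ℝ) - 1)) ≤ ε / 100) :
    ∃ P : Fin n → ℝ, (∀ i, 0 ≤ P i) ∧ (∑ i, P i) = 1 ∧
      ∀ x ∈ Set.Icc (0:ℝ) 1,
        |(∑ i, P i * orderStatDensity n i x) - q x| ≤ ε := by
  obtain ⟨m, rfl⟩ : ∃ m, n = m + 1 := ⟨n - 1, by omega⟩
  have hm : m ≠ 0 := by omega
  have hm_pos : (0 : ℝ) < m := by positivity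
  have hδ : 1 / √(((m + 1 : ℕ) : ℝ) - 1) = (√m)⁻¹ := by push_cast; simp
  rw [hδ] at h1
  set W := ω (√m)⁻¹
  have hW : 0 ≤ W :=
    (abs_nonneg _).trans (abs_sub_le_of_modulus isCompact_Icc hqc hω (left_mem_Icc.2 zero_le_one)
      (left_mem_Icc.2 zero_le_one) (by simp))
  have hmod (x : ℝ) (hx : x ∈ Icc (0 : ℝ) 1) (t : ℝ) (ht : t ∈ Icc (0 : ℝ) 1) :
      |q t - q x| ≤ (1 + |t - x| * √m) * W := by
    simpa [Real.dist_eq] using (convex_Icc (0 : ℝ) 1).dist_le_one_add_div_mul (f := q)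
      (inv_pos.2 (Real.sqrt_pos.2 hm_pos))
      (fun a ha b hb hab => abs_sub_le_of_modulus isCompact_Icc hqc hω ha hb hab) ht hx
  refine ⟨fun k => ∫ t in (k : ℝ) / (m + 1)..(k + 1) / (m + 1), q t, fun k => ?_, ?_,
    fun x hx => ?_⟩
  · exact integral_nonneg (by gcongr; linarith)
      fun u hu => hq0 u (Icc_div_succ_subset_Icc k.is_le hu)
  · have hsum := sum_integral_div_natCast (Nat.succ_ne_zero m)
      (hqc.intervalIntegrable_of_Icc zero_le_one)
    push_cast at hsum
    rw [hsum, hq1]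
  · lift x to I using hx
    simp_rw [orderStatDensity_succ_eq_bernstein, ← mul_assoc, mul_comm _ ((m : ℝ) + 1)]
    refine (abs_sum_mul_bernstein_sub_le hm _ _ (5 / 2 * W) (W / 2) x fun k => ?_).trans ?_
    · exact abs_mul_integral_cell_sub_le hqc hm k.is_le hW (hmod x x.2)
    · have hvar : (x : ℝ) * (1 - x) ≤ 1 := by nlinarith [x.2.1, x.2.2]
      nlinarith

/-- Approximation of a continuous quantile density `q` by a convex combination of
order statistic densities (stochastic Bernstein approximation): under the stated
conditions on the modulus of continuity `ω` of `q`, its maximum `M`, and `n`, there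
are weights `P` with `sup_{x ∈ [0,1]} |Σᵢ Pᵢ fₙⁱ(x) − q(x)| ≤ ε`. -/
theorem stmt_18 (q : ℝ → ℝ) (hqc : ContinuousOn q (Set.Icc 0 1))
    (hq0 : ∀ x ∈ Set.Icc (0:ℝ) 1, 0 ≤ q x)
    (hq1 : (∫ t in (0:ℝ)..1, q t) = 1)
    (M : ℝ) (hM : IsGreatest (q '' Set.Icc (0:ℝ) 1) M)
    (ω : ℝ → ℝ)
    (hω : ∀ h : ℝ, ω h = sSup { d : ℝ | ∃ x ∈ Set.Icc (0:ℝ) 1, ∃ y ∈ Set.Icc (0:ℝ) 1,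
      |x - y| ≤ h ∧ d = |q x - q y| })
    (ε : ℝ) (hε0 : 0 < ε) (hε1 : ε < 1 / 3)
    (n : ℕ) (hn : 2 ≤ n)
    (h1 : ω (1 / Real.sqrt ((n : ℝ) - 1)) ≤ ε / 100)
    (h2 : ω (1 / Real.sqrt ((n : ℝ) - 1)) = 0 ∨
      2 * (n : ℝ) * Real.exp (-(ε ^ 2) / (8 * ω (1 / Real.sqrt ((n : ℝ) - 1)) ^ 2)) ≤ ε)
    (h3 : Real.exp (-(ε ^ 2) * (n : ℝ) / (48 * M ^ 2)) ≤ ε / 2) :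
    ∃ P : Fin n → ℝ, (∀ i, 0 ≤ P i) ∧ (∑ i, P i) = 1 ∧
      ∀ x ∈ Set.Icc (0:ℝ) 1,
        |(∑ i, P i * orderStatDensity n i x) - q x| ≤ ε :=
  stmt_18_general q hqc hq0 hq1 ω hω ε n hn h1
end
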